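/- arXiv:1807.01005 — 5 statements merged into one kernel-verified Lean document; each statement's English description precedes it below -/
import Mathlib

section
/- Let K be a finite abstract simplicial complex on n vertices, viewed as a subcomplex of the standard (n-1)-simplex Δ_{n-1}, let F be a field, and let d ≥ 0. Then there exists a simplicial complex K' obtained from K by adding simplices of dimension at most d (faces of Δ_{n-1}) such that H̃_i(K', F) = 0 for all i ≤ d-1, and H̃_i(K', F) ≅ H̃_i(K, F) for all i ≥ d. -/
open Finset

/-- The faces of an abstract simplicial complex: a set of nonempty finite sets of
vertices, closed under taking nonempty subsets. -/
def IsComplex {V : Type*} (S : Set (Finset V)) : Prop :=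
  (∀ s ∈ S, s.Nonempty) ∧ ∀ s ∈ S, ∀ t ⊆ s, t.Nonempty → t ∈ S

/-- The nerve of a collection `Γ` of (sub)complexes, as a set of finsets of the index
type: the simplices are the nonempty subcollections with a common face. -/
def nerveC {ι V : Type*} (Γ : ι → Set (Finset V)) : Set (Finset ι) :=
  {σ | σ.Nonempty ∧ (⋂ i ∈ (σ : Finset ι), Γ i).Nonempty}

/-- Simplicial `n`-chains (dimension `n`, i.e. on vertex sets of cardinality `n+1`)
on the vertex type `V`, with coefficients in `A`. -/
abbrev Chains (A V : Type*) [AddCommGroup A] [LinearOrder V] (n : ℕ) : Type _ :=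
  {s : Finset V // s.card = n + 1} →₀ A

variable (R : Type*) [CommRing R] (A : Type*) [AddCommGroup A] [Module R A]
variable (V : Type*) [LinearOrder V]

/-- The simplicial boundary map, with the usual alternating signs determined by the
linear order on the vertices. -/
noncomputable def bdry (n : ℕ) : Chains A V (n + 1) →ₗ[R] Chains A V n :=
  Finsupp.lsum R fun s =>
    ∑ v ∈ (s : Finset V).attach,
      ((-1 : ℤ) ^ (((s : Finset V).filter (fun w => w < v.1)).card)) •
        (Finsupp.lsingle (R := R) ⟨(s : Finset V).erase v.1, by
          rw [Finset.card_erase_of_mem v.2, s.2]; rfl⟩)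

/-- The augmentation map on `0`-chains. -/
noncomputable def aug : Chains A V 0 →ₗ[R] A :=
  Finsupp.lsum R fun _ => LinearMap.id

/-- Reduced cycles: kernel of the boundary map, resp. of the augmentation in degree 0. -/
noncomputable def cycles : (n : ℕ) → Submodule R (Chains A V n)
  | 0 => LinearMap.ker (aug R A V)
  | (n + 1) => LinearMap.ker (bdry R A V n)

/-- Chains supported on the simplices belonging to `S`. -/
def chainsIn (S : Set (Finset V)) (n : ℕ) : Submodule R (Chains A V n) :=
  Finsupp.supported A R {s : {s : Finset V // s.card = n + 1} | ↑s ∈ S}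

/-- Reduced cycles of the complex `S`. -/
noncomputable def cyclesIn (S : Set (Finset V)) (n : ℕ) : Submodule R (Chains A V n) :=
  cycles R A V n ⊓ chainsIn R A V S n

/-- Boundaries of chains of the complex `S`. -/
noncomputable def boundariesIn (S : Set (Finset V)) (n : ℕ) : Submodule R (Chains A V n) :=
  Submodule.map (bdry R A V n) (chainsIn R A V S (n + 1))

/-- Reduced simplicial homology of the complex `S` in degree `n ≥ 0`,
with coefficients in the `R`-module `A`. -/
noncomputable abbrev redH (S : Set (Finset V)) (n : ℕ) : Type _ :=
  (cyclesIn R A V S n) ⧸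
    (Submodule.comap (cyclesIn R A V S n).subtype (boundariesIn R A V S n))

/-- Vanishing of the reduced homology of `S` in degree `n : ℤ`, with the convention
that `H̃₋₁(S) = 0` iff `S` is nonempty (and trivial vanishing below degree `-1`). -/
def RedHVanish (S : Set (Finset V)) (n : ℤ) : Prop :=
  if n < -1 then True
  else if n = -1 then S.Nonempty
  else Subsingleton (redH R A V S n.toNat)

open scoped Classical in
/-- The dimension (rank) of the reduced homology of `S` in degree `n : ℤ`; in degree `-1`
it is `0` iff `S` is nonempty, in accordance with the convention. -/
noncomputable def redHRank (S : Set (Finset V)) (n : ℤ) : Cardinal :=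
  if n < -1 then 0
  else if n = -1 then (if S.Nonempty then (0 : Cardinal) else 1)
  else Module.rank R (redH R A V S n.toNat)

/-! Write `d = e + 1` and add to `K` every simplex of dimension `≤ e` on its vertices. Below
degree `e` the result has the same cycles and boundaries as the full simplex on those vertices,
which is a cone and hence acyclic. In degree `e` every cycle bounds in the full simplex, so it
suffices to add a set `T` of `d`-simplices whose boundaries form a basis of the span of all such
boundaries modulo the boundaries of `K`. That linear independence says that no chain of `K` plus a
nonzero chain on `T` is a cycle, so the `d`-cycles, and with them all homology in degrees `≥ d`,
are those of `K`. -/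

section Cone

variable {R A V}

/-- The chain `a • u`, which is `0` when `u` does not have `n + 1` vertices. -/
noncomputable def singleChain (n : ℕ) (u : Finset V) (a : A) : Chains A V n :=
  if h : u.card = n + 1 then Finsupp.single ⟨u, h⟩ a else 0

theorem singleChain_of_card {n : ℕ} {u : Finset V} (h : u.card = n + 1) (a : A) :
    singleChain n u a = Finsupp.single ⟨u, h⟩ a :=
  dif_pos h

theorem singleChain_coe {n : ℕ} (s : {s : Finset V // s.card = n + 1}) (a : A) :
    singleChain n (s : Finset V) a = Finsupp.single s a :=
  singleChain_of_card s.2 a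

theorem singleChain_add (n : ℕ) (u : Finset V) (a b : A) :
    singleChain n u (a + b) = singleChain n u a + singleChain n u b := by
  unfold singleChain
  split
  · rw [Finsupp.single_add]
  · rw [add_zero]

theorem bdry_singleChain {n : ℕ} {u : Finset V} (hu : u.card = n + 2) (a : A) :
    bdry R A V n (singleChain (n + 1) u a)
      = ∑ v ∈ u, (-1 : ℤ) ^ #{w ∈ u | w < v} • singleChain n (u.erase v) a := by
  rw [singleChain_of_card hu, bdry, Finsupp.lsum_single, LinearMap.sum_apply,
    ← Finset.sum_attach u]
  refine Finset.sum_congr rfl fun v _ => ?_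
  rw [LinearMap.smul_apply, Finsupp.lsingle_apply,
    singleChain_of_card (by rw [Finset.card_erase_of_mem v.2, hu]; rfl)]

variable (R) in
/-- The cone operator with apex `v₀`: `u ↦ ±(v₀ * u)`, the sign being that of moving `v₀` into
its place in `insert v₀ u`. -/
noncomputable def cone (v₀ : V) (n : ℕ) : Chains A V n →ₗ[R] Chains A V (n + 1) :=
  Finsupp.lsum R fun s =>
    if h : v₀ ∈ (s : Finset V) then 0 else
      (-1 : ℤ) ^ #{w ∈ (s : Finset V) | w < v₀} •
        Finsupp.lsingle (R := R) ⟨insert v₀ (s : Finset V), by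
          rw [Finset.card_insert_of_notMem h, s.2]⟩

variable (v₀ : V)

theorem cone_singleChain {n : ℕ} {u : Finset V} (hu : u.card = n + 1) (a : A) :
    cone R v₀ n (singleChain n u a)
      = if v₀ ∈ u then 0 else
          (-1 : ℤ) ^ #{w ∈ u | w < v₀} • singleChain (n + 1) (insert v₀ u) a := by
  rw [singleChain_of_card hu, cone, Finsupp.lsum_single]
  by_cases hv : v₀ ∈ u
  · simp [hv]
  · rw [dif_neg hv, if_neg hv, LinearMap.smul_apply, Finsupp.lsingle_apply,
      singleChain_of_card (by rw [Finset.card_insert_of_notMem hv, hu])]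

theorem card_filter_lt_insert_self (s : Finset V) :
    #{w ∈ insert v₀ s | w < v₀} = #{w ∈ s | w < v₀} := by
  rw [Finset.filter_insert, if_neg (lt_irrefl v₀)]

theorem filter_lt_erase_self (s : Finset V) :
    {w ∈ s.erase v₀ | w < v₀} = {w ∈ s | w < v₀} := by
  rw [Finset.filter_erase]
  exact Finset.erase_eq_of_notMem fun h => lt_irrefl v₀ (Finset.mem_filter.1 h).2

/-- Taking the `v`-th face commutes with coning off from `v₀` up to exactly one sign. -/
theorem neg_one_pow_cone_face {s : Finset V} {v : V} (hv : v ∈ s) (hv₀ : v₀ ∉ s) :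
    (-1 : ℤ) ^ (#{w ∈ s | w < v₀} + #{w ∈ insert v₀ s | w < v})
      = -(-1 : ℤ) ^ (#{w ∈ s | w < v} + #{w ∈ s.erase v | w < v₀}) := by
  rw [Finset.filter_erase, Finset.filter_insert]
  rcases lt_or_gt_of_ne (ne_of_mem_of_not_mem hv hv₀) with hlt | hgt
  · obtain ⟨k, hk⟩ := Nat.exists_eq_add_of_lt
      (Finset.card_pos.2 ⟨v, Finset.mem_filter.2 ⟨hv, hlt⟩⟩ : 0 < #{w ∈ s | w < v₀})
    rw [if_neg (not_lt.2 hlt.le), Finset.card_erase_of_mem (Finset.mem_filter.2 ⟨hv, hlt⟩), hk]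
    simp only [zero_add, Nat.add_sub_cancel, pow_add, pow_succ]
    ring
  · rw [if_pos hgt, Finset.card_insert_of_notMem fun h => hv₀ (Finset.mem_filter.1 h).1,
      Finset.erase_eq_of_notMem (s := {w ∈ s | w < v₀}) fun h =>
        not_lt.2 hgt.le (Finset.mem_filter.1 h).2,
      pow_add, pow_add, pow_succ]
    ring

theorem neg_one_pow_smul_neg_one_pow_smul {M : Type*} [AddCommGroup M] (k : ℕ) (x : M) :
    (-1 : ℤ) ^ k • (-1 : ℤ) ^ k • x = x := by
  rw [smul_smul, ← pow_add, Even.neg_one_pow ⟨k, rfl⟩, one_smul]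

theorem bdry_cone_add_cone_bdry_singleChain {n : ℕ} {u : Finset V} (hu : u.card = n + 2)
    (a : A) :
    bdry R A V (n + 1) (cone R v₀ (n + 1) (singleChain (n + 1) u a))
      + cone R v₀ n (bdry R A V n (singleChain (n + 1) u a)) = singleChain (n + 1) u a := by
  rw [bdry_singleChain hu, cone_singleChain v₀ hu, map_sum]
  by_cases hv : v₀ ∈ u
  · -- only the face opposite to `v₀` survives, and coning it off gives back `u`
    rw [if_pos hv, map_zero, zero_add,
      Finset.sum_eq_single v₀ (fun v hvs hne => ?_) (fun h => absurd hv h)]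
    · rw [map_zsmul, cone_singleChain v₀ (by rw [Finset.card_erase_of_mem hv, hu]; rfl),
        if_neg (Finset.notMem_erase v₀ u), filter_lt_erase_self, Finset.insert_erase hv,
        neg_one_pow_smul_neg_one_pow_smul]
    · rw [map_zsmul, cone_singleChain v₀ (by rw [Finset.card_erase_of_mem hvs, hu]; rfl),
        if_pos (Finset.mem_erase.2 ⟨fun h => hne h.symm, hv⟩), smul_zero]
  · -- the face of `v₀ * u` opposite to `v₀` is `u`; the other faces cancel in pairs
    rw [if_neg hv, map_zsmul,
      bdry_singleChain (by rw [Finset.card_insert_of_notMem hv, hu]),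
      Finset.sum_insert hv, card_filter_lt_insert_self v₀, Finset.erase_insert hv,
      smul_add, neg_one_pow_smul_neg_one_pow_smul, add_assoc, add_eq_left,
      Finset.smul_sum, ← Finset.sum_add_distrib]
    refine Finset.sum_eq_zero fun v hvs => ?_
    rw [Finset.erase_insert_of_ne (ne_of_mem_of_not_mem hvs hv).symm, map_zsmul,
      cone_singleChain v₀ (by rw [Finset.card_erase_of_mem hvs, hu]; rfl),
      if_neg fun h => hv (Finset.mem_of_mem_erase h), smul_smul, smul_smul, ← pow_add,
      ← pow_add, neg_one_pow_cone_face v₀ hvs hv, neg_smul, neg_add_cancel]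

theorem bdry_cone_add_cone_bdry {n : ℕ} (c : Chains A V (n + 1)) :
    bdry R A V (n + 1) (cone R v₀ (n + 1) c) + cone R v₀ n (bdry R A V n c) = c := by
  induction c using Finsupp.induction_linear with
  | zero => simp
  | add f g hf hg =>
    rw [map_add, map_add, map_add, map_add, add_add_add_comm, hf, hg]
  | single s a =>
    rw [← singleChain_coe s a]
    exact bdry_cone_add_cone_bdry_singleChain v₀ s.2 a

theorem bdry_cone_singleChain_zero {u : Finset V} (hu : u.card = 1) (a : A) :
    bdry R A V 0 (cone R v₀ 0 (singleChain 0 u a))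
      = singleChain 0 u a - singleChain 0 {v₀} a := by
  obtain ⟨x, rfl⟩ := Finset.card_eq_one.1 hu
  by_cases hvx : v₀ = x
  · subst hvx
    rw [cone_singleChain v₀ hu, if_pos (Finset.mem_singleton_self v₀), map_zero, sub_self]
  · have hv : v₀ ∉ ({x} : Finset V) := Finset.notMem_singleton.2 hvx
    rw [cone_singleChain v₀ hu, if_neg hv, map_zsmul,
      bdry_singleChain (by rw [Finset.card_insert_of_notMem hv, hu]),
      Finset.sum_insert hv, card_filter_lt_insert_self v₀, Finset.erase_insert hv,
      smul_add, neg_one_pow_smul_neg_one_pow_smul, Finset.sum_singleton,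
      Finset.erase_insert_of_ne hvx, Finset.erase_singleton, smul_smul, ← pow_add,
      neg_one_pow_cone_face v₀ (Finset.mem_singleton_self x) hv, Finset.erase_singleton]
    simp [sub_eq_add_neg, Finset.filter_singleton]

theorem bdry_cone_zero (c : Chains A V 0) :
    bdry R A V 0 (cone R v₀ 0 c) = c - singleChain 0 {v₀} (aug R A V c) := by
  induction c using Finsupp.induction_linear with
  | zero => simp [singleChain]
  | add f g hf hg =>
    rw [map_add, map_add, hf, hg, map_add, singleChain_add]
    abel
  | single s a =>
    rw [aug, Finsupp.lsum_single, LinearMap.id_apply, ← singleChain_coe s a]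
    exact bdry_cone_singleChain_zero v₀ s.2 a

theorem bdry_cone_of_mem_cycles {n : ℕ} {c : Chains A V n} (hc : c ∈ cycles R A V n) :
    bdry R A V n (cone R v₀ n c) = c := by
  cases n with
  | zero =>
    rw [bdry_cone_zero, show aug R A V c = 0 from hc]
    simp [singleChain]
  | succ n =>
    have h := bdry_cone_add_cone_bdry (R := R) v₀ c
    rwa [show bdry R A V n c = 0 from hc, map_zero, add_zero] at h

end Cone

section Support

variable {R A V}

theorem singleChain_mem_chainsIn {S : Set (Finset V)} {n : ℕ} {u : Finset V} (hu : u ∈ S)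
    (a : A) : singleChain n u a ∈ chainsIn R A V S n := by
  unfold singleChain
  split
  · exact Finsupp.single_mem_supported R a hu
  · exact zero_mem _

theorem chainsIn_le_of_forall_card {S T : Set (Finset V)} {n : ℕ}
    (h : ∀ s ∈ S, s.card = n + 1 → s ∈ T) : chainsIn R A V S n ≤ chainsIn R A V T n :=
  Finsupp.supported_mono fun s hs => h s hs s.2

theorem chainsIn_mono {S T : Set (Finset V)} (hST : S ⊆ T) (n : ℕ) :
    chainsIn R A V S n ≤ chainsIn R A V T n :=
  chainsIn_le_of_forall_card fun _ hs _ => hST hs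

theorem map_mem_chainsIn {S T : Set (Finset V)} {n m : ℕ}
    (f : Chains A V n →ₗ[R] Chains A V m)
    (h : ∀ s : {s : Finset V // s.card = n + 1}, (s : Finset V) ∈ S →
      ∀ a, f (Finsupp.single s a) ∈ chainsIn R A V T m)
    {c : Chains A V n} (hc : c ∈ chainsIn R A V S n) : f c ∈ chainsIn R A V T m := by
  rw [← c.sum_single, map_finsuppSum, Finsupp.sum]
  exact Submodule.sum_mem _ fun s hs => h s (hc hs) _

theorem cone_mem_chainsIn (v₀ : V) {S : Set (Finset V)}
    (hS : ∀ s ∈ S, v₀ ∉ s → insert v₀ s ∈ S) {n : ℕ} {c : Chains A V n}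
    (hc : c ∈ chainsIn R A V S n) : cone R v₀ n c ∈ chainsIn R A V S (n + 1) := by
  refine map_mem_chainsIn _ (fun s hs a => ?_) hc
  rw [← singleChain_coe, cone_singleChain v₀ s.2]
  split_ifs with hv
  · exact zero_mem _
  · exact Submodule.smul_of_tower_mem _ _ (singleChain_mem_chainsIn (hS _ hs hv) a)

/-- A cone is acyclic. -/
theorem cyclesIn_le_boundariesIn_of_cone (v₀ : V) {S : Set (Finset V)}
    (hS : ∀ s ∈ S, v₀ ∉ s → insert v₀ s ∈ S) (n : ℕ) :
    cyclesIn R A V S n ≤ boundariesIn R A V S n := fun c hc =>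
  ⟨cone R v₀ n c, cone_mem_chainsIn v₀ hS (Submodule.mem_inf.1 hc).2,
    bdry_cone_of_mem_cycles v₀ (Submodule.mem_inf.1 hc).1⟩

theorem redHVanish_of_cyclesIn_le {S : Set (Finset V)} {d : ℕ} (hS : S.Nonempty)
    (h : ∀ n < d, cyclesIn R A V S n ≤ boundariesIn R A V S n) (i : ℤ) (hi : i ≤ d - 1) :
    RedHVanish R A V S i := by
  unfold RedHVanish
  split_ifs with h₁ h₂
  · exact hS
  · rw [Submodule.Quotient.subsingleton_iff, Submodule.eq_top_iff']
    exact fun x => h _ (by omega) x.2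

theorem nonempty_redH_equiv_of_eq {S T : Set (Finset V)} {n : ℕ}
    (hZ : cyclesIn R A V S n = cyclesIn R A V T n)
    (hB : boundariesIn R A V S n = boundariesIn R A V T n) :
    Nonempty (redH R A V S n ≃ₗ[R] redH R A V T n) := by
  unfold redH
  rw [hZ, hB]
  exact ⟨.refl _ _⟩

end Support

section Combinatorics

variable {α : Type*}

theorem singleton_mem_of_mem {K : Set (Finset α)} (hK : IsComplex K) {s : Finset α} (hs : s ∈ K)
    {v : α} (hv : v ∈ s) : {v} ∈ K :=
  hK.2 s hs {v} (Finset.singleton_subset_iff.2 hv) (Finset.singleton_nonempty v)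

/-- The full simplex on the vertex set of `K`. -/
def fullOn (K : Set (Finset α)) : Set (Finset α) :=
  {s | s.Nonempty ∧ ∀ v ∈ s, {v} ∈ K}

theorem subset_fullOn {K : Set (Finset α)} (hK : IsComplex K) : K ⊆ fullOn K :=
  fun s hs => ⟨hK.1 s hs, fun _ hv => singleton_mem_of_mem hK hs hv⟩

theorem insert_mem_fullOn [DecidableEq α] {K : Set (Finset α)} {v₀ : α} (hv₀ : {v₀} ∈ K)
    {s : Finset α} (hs : s ∈ fullOn K) : insert v₀ s ∈ fullOn K := by
  refine ⟨Finset.insert_nonempty v₀ s, fun v hv => ?_⟩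
  rcases Finset.mem_insert.1 hv with rfl | hv
  · exact hv₀
  · exact hs.2 v hv

def attachSimplices (K : Set (Finset α)) (e : ℕ) (T : Set {s : Finset α // s.card = e + 1 + 1}) :
    Set (Finset α) :=
  K ∪ {s ∈ fullOn K | s.card ≤ e + 1} ∪ Subtype.val '' T

variable {K : Set (Finset α)} {e : ℕ} {T : Set {s : Finset α // s.card = e + 1 + 1}}

theorem subset_attachSimplices : K ⊆ attachSimplices K e T :=
  fun _ hs => Or.inl (Or.inl hs)

theorem attachSimplices_subset_fullOn (hK : IsComplex K)
    (hT : ∀ s ∈ T, (s : Finset α) ∈ fullOn K) : attachSimplices K e T ⊆ fullOn K := by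
  rintro s ((hs | hs) | ⟨s, hs, rfl⟩)
  · exact subset_fullOn hK hs
  · exact hs.1
  · exact hT s hs

theorem isComplex_attachSimplices (hK : IsComplex K) (hT : ∀ s ∈ T, (s : Finset α) ∈ fullOn K) :
    IsComplex (attachSimplices K e T) := by
  refine ⟨fun s hs => (attachSimplices_subset_fullOn hK hT hs).1, fun s hs t hts ht => ?_⟩
  by_cases htc : t.card ≤ e + 1
  · refine Or.inl (Or.inr ⟨⟨ht, fun v hv => ?_⟩, htc⟩)
    exact (attachSimplices_subset_fullOn hK hT hs).2 v (hts hv)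
  rcases hs with (hs | hs) | ⟨s, hs, rfl⟩
  · exact subset_attachSimplices (hK.2 s hs t hts ht)
  · exact absurd ((Finset.card_le_card hts).trans hs.2) htc
  · rw [Finset.eq_of_subset_of_card_le hts (by rw [s.2]; omega)]
    exact Or.inr ⟨s, hs, rfl⟩

theorem card_le_of_mem_attachSimplices {s : Finset α} (hs : s ∈ attachSimplices K e T)
    (hsK : s ∉ K) : s.card ≤ e + 1 + 1 := by
  rcases hs with (hs | hs) | ⟨s, -, rfl⟩
  · exact absurd hs hsK
  · exact hs.2.trans (Nat.le_succ _)
  · exact s.2.le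

end Combinatorics

/-- The vectors `f (single i 1)`, `i ∈ T`, form a basis of `(supported P).map f` modulo `B`. -/
theorem exists_subset_disjoint_comap_map_le_sup {F ι M : Type*} [Field F] [AddCommGroup M]
    [Module F M] (f : (ι →₀ F) →ₗ[F] M) (B : Submodule F M) (P : Set ι) :
    ∃ T ⊆ P, Disjoint (Finsupp.supported F F T) (B.comap f) ∧
      (Finsupp.supported F F P).map f ≤ B ⊔ (Finsupp.supported F F T).map f := by
  set v : ι → M ⧸ B := fun i => B.mkQ (f (Finsupp.single i 1))
  have hv : B.mkQ ∘ₗ f = Finsupp.linearCombination F v := Finsupp.lhom_ext fun i a => by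
    rw [Finsupp.linearCombination_single, LinearMap.comp_apply, ← map_smul, ← map_smul,
      Finsupp.smul_single_one]
  obtain ⟨T, hTP, -, hPT, hT⟩ :=
    exists_linearIndepOn_extension (linearIndepOn_empty F v) (Set.empty_subset P)
  refine ⟨T, hTP, Submodule.disjoint_def.2 fun c hcT hcB => ?_, ?_⟩
  · refine linearIndepOn_iff.1 hT c hcT ?_
    rw [← hv, LinearMap.comp_apply, Submodule.mkQ_apply, Submodule.Quotient.mk_eq_zero]
    exact hcB
  · rw [← Submodule.comap_map_mkQ, ← Submodule.map_le_iff_le_comap, ← Submodule.map_comp,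
      ← Submodule.map_comp, hv, ← Finsupp.span_image_eq_map_linearCombination,
      ← Finsupp.span_image_eq_map_linearCombination]
    exact Submodule.span_le.2 hPT

section Attach

variable {R A V} {K : Set (Finset V)} {e : ℕ} {T : Set {s : Finset V // s.card = e + 1 + 1}}

theorem chainsIn_fullOn_le_attachSimplices {n : ℕ} (hn : n ≤ e) :
    chainsIn R A V (fullOn K) n ≤ chainsIn R A V (attachSimplices K e T) n :=
  chainsIn_le_of_forall_card fun _ hs hc => Or.inl (Or.inr ⟨hs, by omega⟩)

theorem chainsIn_attachSimplices_succ :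
    chainsIn R A V (attachSimplices K e T) (e + 1)
      = chainsIn R A V K (e + 1) ⊔ Finsupp.supported A R T := by
  rw [chainsIn, chainsIn, ← Finsupp.supported_union]
  congr 1
  ext s
  constructor
  · rintro ((hs | hs) | ⟨t, ht, hts⟩)
    · exact Or.inl hs
    · exact absurd hs.2 (by rw [s.2]; omega)
    · exact Or.inr (Subtype.ext hts ▸ ht)
  · rintro (hs | hs)
    · exact Or.inl (Or.inl hs)
    · exact Or.inr ⟨s, hs, rfl⟩

theorem chainsIn_attachSimplices_of_le {n : ℕ} (hn : e + 2 ≤ n) :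
    chainsIn R A V (attachSimplices K e T) n = chainsIn R A V K n := by
  refine le_antisymm (chainsIn_le_of_forall_card fun s hs hc => ?_)
    (chainsIn_mono subset_attachSimplices n)
  rcases hs with (hs | ⟨-, hs⟩) | ⟨s, -, rfl⟩
  · exact hs
  · omega
  · have := s.2
    omega

theorem boundariesIn_attachSimplices_of_le {n : ℕ} (hn : e + 1 ≤ n) :
    boundariesIn R A V (attachSimplices K e T) n = boundariesIn R A V K n := by
  rw [boundariesIn, boundariesIn, chainsIn_attachSimplices_of_le (by omega)]

variable {F : Type*} [Field F]

theorem cyclesIn_attachSimplices_of_le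
    (hT : Disjoint (Finsupp.supported F F T) ((boundariesIn F F V K e).comap (bdry F F V e)))
    {n : ℕ} (hn : e + 1 ≤ n) :
    cyclesIn F F V (attachSimplices K e T) n = cyclesIn F F V K n := by
  obtain rfl | hlt := hn.eq_or_lt
  · refine le_antisymm (fun c hc => ?_) (inf_le_inf_left _ (chainsIn_mono subset_attachSimplices _))
    obtain ⟨hcyc, hch⟩ := Submodule.mem_inf.1 hc
    rw [chainsIn_attachSimplices_succ] at hch
    obtain ⟨c₁, hc₁, c₂, hc₂, rfl⟩ := Submodule.mem_sup.1 hch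
    have hc₂B : bdry F F V e c₂ ∈ boundariesIn F F V K e := by
      refine ⟨-c₁, neg_mem hc₁, ?_⟩
      rw [map_neg, neg_eq_iff_add_eq_zero, ← map_add]
      exact hcyc
    obtain rfl := Submodule.disjoint_def.1 hT c₂ hc₂ hc₂B
    rw [add_zero] at hcyc ⊢
    exact Submodule.mem_inf.2 ⟨hcyc, hc₁⟩
  · unfold cyclesIn
    rw [chainsIn_attachSimplices_of_le hlt]

theorem cyclesIn_attachSimplices_le_boundariesIn (hK : IsComplex K) {v₀ : V} (hv₀ : {v₀} ∈ K)
    (hT : ∀ s ∈ T, (s : Finset V) ∈ fullOn K)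
    (hTspan : (chainsIn F F V (fullOn K) (e + 1)).map (bdry F F V e)
      ≤ boundariesIn F F V K e ⊔ (Finsupp.supported F F T).map (bdry F F V e))
    {n : ℕ} (hn : n ≤ e) :
    cyclesIn F F V (attachSimplices K e T) n ≤ boundariesIn F F V (attachSimplices K e T) n := by
  intro c hc
  have hc_full : c ∈ boundariesIn F F V (fullOn K) n :=
    cyclesIn_le_boundariesIn_of_cone v₀ (fun s hs _ => insert_mem_fullOn hv₀ hs) n
      (inf_le_inf_left _ (chainsIn_mono (attachSimplices_subset_fullOn hK hT) n) hc)
  obtain hlt | rfl := hn.lt_or_eq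
  · exact Submodule.map_mono (chainsIn_fullOn_le_attachSimplices hlt) hc_full
  · rw [boundariesIn, chainsIn_attachSimplices_succ, Submodule.map_sup]
    exact hTspan hc_full

end Attach

theorem homology_killing_general {V : Type*} [LinearOrder V]
    (F : Type*) [Field F]
    (K : Set (Finset V)) (hK : IsComplex K) (hne : K.Nonempty) (d : ℕ) :
    ∃ K' : Set (Finset V), IsComplex K' ∧ K ⊆ K' ∧
      (∀ s ∈ K', ∀ v ∈ s, {v} ∈ K) ∧
      (∀ s ∈ K', s ∉ K → s.card ≤ d + 1) ∧
      (∀ i : ℤ, i ≤ (d : ℤ) - 1 → RedHVanish F F V K' i) ∧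
      (∀ i : ℕ, d ≤ i → Nonempty (redH F F V K' i ≃ₗ[F] redH F F V K i)) := by
  cases d with
  | zero =>
    exact ⟨K, hK, subset_rfl, fun s hs v hv => singleton_mem_of_mem hK hs hv,
      fun s hs hsK => absurd hs hsK,
      redHVanish_of_cyclesIn_le hne fun n hn => absurd hn n.not_lt_zero,
      fun _ _ => ⟨.refl _ _⟩⟩
  | succ e =>
    obtain ⟨v₀, hv₀⟩ : ∃ v₀ : V, {v₀} ∈ K := by
      obtain ⟨s, hs⟩ := hne
      obtain ⟨v, hv⟩ := hK.1 s hs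
      exact ⟨v, singleton_mem_of_mem hK hs hv⟩
    obtain ⟨T, hTfull, hTindep, hTspan⟩ := exists_subset_disjoint_comap_map_le_sup
      (bdry F F V e) (boundariesIn F F V K e) {s | (s : Finset V) ∈ fullOn K}
    refine ⟨attachSimplices K e T, isComplex_attachSimplices hK hTfull, subset_attachSimplices,
      fun s hs v hv => (attachSimplices_subset_fullOn hK hTfull hs).2 v hv,
      fun s hs hsK => card_le_of_mem_attachSimplices hs hsK,
      redHVanish_of_cyclesIn_le (hne.mono subset_attachSimplices) fun n hn =>
        cyclesIn_attachSimplices_le_boundariesIn hK hv₀ hTfull hTspan (Nat.lt_succ_iff.1 hn),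
      fun i hi => nonempty_redH_equiv_of_eq (cyclesIn_attachSimplices_of_le hTindep hi)
        (boundariesIn_attachSimplices_of_le hi)⟩

/-- Homology-killing lemma: one can attach simplices of dimension at most `d` (faces of
the full simplex on the vertices of `K`) so as to kill all homology in degrees `≤ d-1`
while keeping the homology in degrees `≥ d` unchanged. -/
theorem homology_killing {V : Type*} [LinearOrder V] [Fintype V]
    (F : Type*) [Field F]
    (K : Set (Finset V)) (hK : IsComplex K) (hne : K.Nonempty) (d : ℕ) :
    ∃ K' : Set (Finset V), IsComplex K' ∧ K ⊆ K' ∧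
      (∀ s ∈ K', ∀ v ∈ s, {v} ∈ K) ∧
      (∀ s ∈ K', s ∉ K → s.card ≤ d + 1) ∧
      (∀ i : ℤ, i ≤ (d : ℤ) - 1 → RedHVanish F F V K' i) ∧
      (∀ i : ℕ, d ≤ i → Nonempty (redH F F V K' i ≃ₗ[F] redH F F V K i)) :=
  homology_killing_general F K hK hne d
end

section
/- There is no analogue of the homology-killing lemma over the integers: if K is a triangulation of the real projective plane, then for every 2-dimensional simplicial complex L (on a vertex set containing that of K), either H̃_2(K ∪ L, ℤ) ≠ 0 or H̃_1(K ∪ L, ℤ) ≠ 0. -/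
open Finset

variable (R : Type*) [CommRing R] (A : Type*) [AddCommGroup A] [Module R A]
variable (V : Type*) [LinearOrder V]

/-- No integral analogue of the homology-killing lemma: for a triangulation `K` of the
real projective plane (`H̃₂(K,ℤ) = 0`, `H̃₁(K,ℤ) = ℤ/2`, `K` two-dimensional) and any
two-dimensional complex `L`, either `H̃₂(K ∪ L, ℤ) ≠ 0` or `H̃₁(K ∪ L, ℤ) ≠ 0`. -/
theorem no_integral_killing {V : Type*} [LinearOrder V]
    (K : Set (Finset V)) (hK : IsComplex K)
    (hKdim : ∀ s ∈ K, s.card ≤ 3)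
    (hH2 : Subsingleton (redH ℤ ℤ V K 2))
    (hH1 : Nonempty (redH ℤ ℤ V K 1 ≃ₗ[ℤ] ZMod 2))
    (L : Set (Finset V)) (hL : IsComplex L) (hLdim : ∀ s ∈ L, s.card ≤ 3) :
    ¬ (Subsingleton (redH ℤ ℤ V (K ∪ L) 2) ∧ Subsingleton (redH ℤ ℤ V (K ∪ L) 1)) := by
  rintro ⟨h2, h1⟩
  set M := K ∪ L with hMdef
  have hMdim : ∀ s ∈ M, s.card ≤ 3 := by
    rintro s (hs | hs)
    · exact hKdim s hs
    · exact hLdim s hs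
  -- chains in degree 3 vanish
  have hch3 : chainsIn ℤ ℤ V M 3 = ⊥ := by
    have hset : {s : {s : Finset V // s.card = 3 + 1} | ↑s ∈ M} = ∅ := by
      ext s
      simp only [Set.mem_setOf_eq, Set.mem_empty_iff_false, iff_false]
      intro hs
      have := hMdim _ hs
      have := s.2
      omega
    rw [chainsIn, hset, Finsupp.supported_empty]
  have hbd2 : boundariesIn ℤ ℤ V M 2 = ⊥ := by
    rw [boundariesIn, hch3, Submodule.map_bot]
  -- cycles of M in degree 2 vanish
  have hcyc2 : ∀ x : Chains ℤ V 2, x ∈ cyclesIn ℤ ℤ V M 2 → x = 0 := by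
    intro x hx
    have hq : (Submodule.Quotient.mk (⟨x, hx⟩ : cyclesIn ℤ ℤ V M 2) :
        redH ℤ ℤ V M 2) = 0 := Subsingleton.elim _ _
    rw [Submodule.Quotient.mk_eq_zero, Submodule.mem_comap, hbd2, Submodule.mem_bot] at hq
    exact hq
  -- every 1-cycle of M is a boundary in M
  have hcyc1 : ∀ x : Chains ℤ V 1, x ∈ cyclesIn ℤ ℤ V M 1 →
      x ∈ boundariesIn ℤ ℤ V M 1 := by
    intro x hx
    have hq : (Submodule.Quotient.mk (⟨x, hx⟩ : cyclesIn ℤ ℤ V M 1) :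
        redH ℤ ℤ V M 1) = 0 := Subsingleton.elim _ _
    rwa [Submodule.Quotient.mk_eq_zero, Submodule.mem_comap] at hq
  -- monotonicity
  have hKM : K ⊆ M := Set.subset_union_left
  have hchmono : ∀ n, chainsIn ℤ ℤ V K n ≤ chainsIn ℤ ℤ V M n := by
    intro n
    apply Finsupp.supported_mono
    intro s hs
    exact hKM hs
  -- extract the torsion class from H1(K) ≅ ℤ/2
  obtain ⟨e⟩ := hH1
  set N := Submodule.comap (cyclesIn ℤ ℤ V K 1).subtype (boundariesIn ℤ ℤ V K 1) with hN
  have hq1 : e.symm 1 ≠ 0 := by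
    intro h
    rw [LinearEquiv.map_eq_zero_iff] at h
    exact one_ne_zero h
  have hq2 : e.symm 1 + e.symm 1 = 0 := by
    rw [← map_add]
    have : (1 : ZMod 2) + 1 = 0 := by decide
    rw [this, map_zero]
  obtain ⟨x, hxq⟩ := Submodule.Quotient.mk_surjective N (e.symm 1)
  have hx1 : (x : Chains ℤ V 1) ∉ boundariesIn ℤ ℤ V K 1 := by
    intro h
    apply hq1
    rw [← hxq, Submodule.Quotient.mk_eq_zero]
    exact h
  have hx2 : (x : Chains ℤ V 1) + (x : Chains ℤ V 1) ∈ boundariesIn ℤ ℤ V K 1 := by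
    have : Submodule.Quotient.mk (x + x) = (0 : (cyclesIn ℤ ℤ V K 1) ⧸ N) := by
      rw [Submodule.Quotient.mk_add, hxq]
      exact hq2
    rw [Submodule.Quotient.mk_eq_zero] at this
    exact this
  -- x is a cycle in M
  have hxM : (x : Chains ℤ V 1) ∈ cyclesIn ℤ ℤ V M 1 := by
    obtain ⟨hc, hs⟩ := x.2
    exact ⟨hc, hchmono 1 hs⟩
  obtain ⟨d, hdM, hd⟩ := hcyc1 _ hxM
  obtain ⟨c, hcK, hc⟩ := hx2
  -- c - (d + d) is a 2-cycle of M, hence zero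
  have hcycle : c - (d + d) ∈ cyclesIn ℤ ℤ V M 2 := by
    constructor
    · show c - (d + d) ∈ LinearMap.ker (bdry ℤ ℤ V 1)
      rw [LinearMap.mem_ker, map_sub, map_add, hd, hc]
      abel
    · exact Submodule.sub_mem _ (hchmono 2 hcK) (Submodule.add_mem _ hdM hdM)
  have hceq : c = d + d := sub_eq_zero.mp (hcyc2 _ hcycle)
  -- hence d is supported on K
  have hdK : d ∈ chainsIn ℤ ℤ V K 2 := by
    have hcK' : ∀ s ∉ {s : {s : Finset V // s.card = 1 + 1 + 1} | ↑s ∈ K}, c s = 0 :=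
      (Finsupp.mem_supported' ℤ c).mp hcK
    refine (Finsupp.mem_supported' ℤ d).mpr ?_
    intro s hs
    have hc0 := hcK' s hs
    rw [hceq] at hc0
    simp only [Finsupp.add_apply] at hc0
    omega
  exact hx1 ⟨d, hdK, hd⟩
end

section
/- Let G be a graph whose vertices are coloured with three colours (each colour used at least once, colouring not necessarily proper) such that, for each fixed pair of colours, deleting all edges with one endpoint of each of those two colours leaves G connected. If the total domination number of the complement graph satisfies γ̃(Ḡ) ≥ 5, then G contains a triangle whose three vertices receive the three distinct colours. -/
open Finset

variable (R : Type*) [CommRing R] (A : Type*) [AddCommGroup A] [Module R A]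
variable (V : Type*) [LinearOrder V]

/-! If `G` has no rainbow triangle, the `ℤ/2`-valued indicator of the pairs coloured `{0, 1}`
is a `1`-cocycle on the clique complex of `G`. The domination hypothesis says that
any four vertices have a common closed neighbour in `G`, which lets every closed walk be shortened
one step at a time without changing its weight, so every closed walk has weight `0`. But a
`0`–`1` edge `xy` (one exists, because `G` stays connected after deleting the `0`–`2` edges),
closed up by a walk from `y` to `x` avoiding `0`–`1` edges, is a closed walk of weight `1`. -/

section ColourPairWeight

variable {κ : Type*} [DecidableEq κ] {i j : κ}

variable (i j) in
def colourPairWeight (x y : κ) : ZMod 2 :=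
  if (x = i ∧ y = j) ∨ (x = j ∧ y = i) then 1 else 0

lemma colourPairWeight_self (hij : i ≠ j) (x : κ) : colourPairWeight i j x x = 0 :=
  if_neg <| by rintro (⟨rfl, rfl⟩ | ⟨rfl, rfl⟩) <;> exact hij rfl

lemma colourPairWeight_comm (x y : κ) : colourPairWeight i j x y = colourPairWeight i j y x := by
  unfold colourPairWeight
  congr 1
  exact propext (by tauto)

lemma colourPairWeight_add (hij : i ≠ j) {x y z : κ} (h : x = y ∨ y = z ∨ x = z) :
    colourPairWeight i j x y + colourPairWeight i j y z = colourPairWeight i j x z := by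
  rcases h with rfl | rfl | rfl
  · rw [colourPairWeight_self hij, zero_add]
  · rw [colourPairWeight_self hij, add_zero]
  · rw [colourPairWeight_self hij, colourPairWeight_comm y, CharTwo.add_self_eq_zero]

end ColourPairWeight

namespace SimpleGraph

variable {α M κ : Type*} [AddCommGroup M] {G H : SimpleGraph α}

/-- Degenerate triples are included so that `f u u = 0` and `f v u = -f u v` follow. -/
def IsCocycle (G : SimpleGraph α) (f : α → α → M) : Prop :=
  ∀ ⦃u v w⦄, (u = v ∨ G.Adj u v) → (v = w ∨ G.Adj v w) → (u = w ∨ G.Adj u w) →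
    f u v + f v w = f u w

def Walk.weightSum (f : α → α → M) {u v : α} (p : G.Walk u v) : M :=
  (p.darts.map fun d => f d.fst d.snd).sum

namespace Walk

variable (f : α → α → M)

@[simp]
lemma weightSum_nil {u : α} : (nil : G.Walk u u).weightSum f = 0 := rfl

@[simp]
lemma weightSum_cons {u v w : α} (h : G.Adj u v) (p : G.Walk v w) :
    (cons h p).weightSum f = f u v + p.weightSum f := by
  simp [weightSum]

@[simp]
lemma weightSum_mapLe (hGH : G ≤ H) {u v : α} (p : G.Walk u v) :
    (p.mapLe hGH).weightSum f = p.weightSum f := by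
  simp [weightSum, darts_map, Function.comp_def]

lemma weightSum_eq_zero (hf : ∀ u v, G.Adj u v → f u v = 0) {u v : α} (p : G.Walk u v) :
    p.weightSum f = 0 :=
  List.sum_eq_zero fun _ hx => by
    obtain ⟨d, -, rfl⟩ := List.mem_map.mp hx
    exact hf _ _ d.adj

end Walk

namespace IsCocycle

variable {f : α → α → M} (hf : G.IsCocycle f)
include hf

lemma map_self (u : α) : f u u = 0 := by
  simpa using hf (Or.inl rfl) (Or.inl rfl) (Or.inl rfl)

lemma map_swap {u v : α} (h : u = v ∨ G.Adj u v) : f v u = -f u v := by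
  have := hf h (h.imp Eq.symm Adj.symm) (Or.inl rfl)
  rw [hf.map_self] at this
  exact eq_neg_of_add_eq_zero_right this

lemma exists_weightSum_eq (h4 : ∀ s : Finset α, #s ≤ 4 → ∃ z, ∀ u ∈ s, u = z ∨ G.Adj u z) :
    ∀ {a e : α} (p : G.Walk a e), ∃ z, (a = z ∨ G.Adj a z) ∧ (z = e ∨ G.Adj z e) ∧
      p.weightSum f = f a z + f z e
  | a, _, .nil => ⟨a, Or.inl rfl, Or.inl rfl, by simp [hf.map_self]⟩
  | a, e, .cons (v := b) hab p => by
    classical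
    obtain ⟨z, hbz, hze, hp⟩ := exists_weightSum_eq h4 p
    obtain ⟨y, hy⟩ := h4 {a, b, z, e} card_le_four
    have hay := hy a (by simp)
    have hby := hy b (by simp)
    have hzy := hy z (by simp)
    have hey := hy e (by simp)
    refine ⟨y, hay, hey.imp Eq.symm Adj.symm, ?_⟩
    rw [Walk.weightSum_cons, hp, ← hf (Or.inr hab) hby hay, ← hf hbz hzy hby,
      ← hf hze hey hzy, hf.map_swap hey]
    abel

lemma weightSum_eq_zero_of_closed
    (h4 : ∀ s : Finset α, #s ≤ 4 → ∃ z, ∀ u ∈ s, u = z ∨ G.Adj u z) {a : α} (p : G.Walk a a) :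
    p.weightSum f = 0 := by
  obtain ⟨z, haz, -, hp⟩ := hf.exists_weightSum_eq h4 p
  rw [hp, hf.map_swap haz, add_neg_cancel]

end IsCocycle

lemma exists_forall_eq_or_adj_of_card_lt {k : ℕ}
    (hdom : ∀ D : Finset α, (∀ v : α, ∃ u ∈ D, Gᶜ.Adj v u) → k ≤ #D) {s : Finset α}
    (hs : #s < k) : ∃ z, ∀ u ∈ s, u = z ∨ G.Adj u z := by
  by_contra! h
  refine hs.not_ge (hdom s fun v => ?_)
  obtain ⟨u, hu, hne, hadj⟩ := h v
  exact ⟨u, hu, (compl_adj G v u).mpr ⟨Ne.symm hne, fun h' => hadj h'.symm⟩⟩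

section Colouring

variable {i j : κ}

def deleteColourPair (G : SimpleGraph α) (c : α → κ) (i j : κ) : SimpleGraph α :=
  fromRel fun u v => G.Adj u v ∧ ¬((c u = i ∧ c v = j) ∨ (c u = j ∧ c v = i))

lemma deleteColourPair_le (G : SimpleGraph α) (c : α → κ) (i j : κ) :
    G.deleteColourPair c i j ≤ G := fun _ _ h => by
  obtain ⟨-, ⟨h, -⟩ | ⟨h, -⟩⟩ := (fromRel_adj _ _ _).mp h
  exacts [h, h.symm]

variable {c : α → κ}

lemma exists_adj_of_connected_deleteColourPair {k : κ}
    (hconn : (G.deleteColourPair c i k).Connected) {a b : α} (ha : c a = i) (hb : c b ≠ i) :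
    ∃ u v, G.Adj u v ∧ c u = i ∧ c v ≠ i ∧ c v ≠ k := by
  obtain ⟨p⟩ := hconn.preconnected a b
  obtain ⟨d, -, hd, hd'⟩ := p.exists_boundary_dart {v | c v = i} ha hb
  refine ⟨d.fst, d.snd, deleteColourPair_le G c i k d.adj, hd, hd', fun hk => ?_⟩
  obtain ⟨-, ⟨-, hn⟩ | ⟨-, hn⟩⟩ := (fromRel_adj _ _ _).mp d.adj
  · exact hn (Or.inl ⟨hd, hk⟩)
  · exact hn (Or.inr ⟨hk, hd⟩)

variable [DecidableEq κ]

lemma colourPairWeight_eq_zero_of_adj {u v : α} (h : (G.deleteColourPair c i j).Adj u v) :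
    colourPairWeight i j (c u) (c v) = 0 := by
  obtain ⟨-, ⟨-, hn⟩ | ⟨-, hn⟩⟩ := (fromRel_adj _ _ _).mp h
  · exact if_neg hn
  · exact if_neg fun h => hn (h.symm.imp And.symm And.symm)

lemma isCocycle_colourPairWeight (hij : i ≠ j)
    (hG : ∀ u v w, G.Adj u v → G.Adj v w → G.Adj u w → c u = c v ∨ c v = c w ∨ c u = c w) :
    G.IsCocycle fun u v => colourPairWeight i j (c u) (c v) := by
  intro u v w huv hvw huw
  refine colourPairWeight_add hij ?_
  rcases huv with rfl | huv
  · exact Or.inl rfl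
  rcases hvw with rfl | hvw
  · exact Or.inr (Or.inl rfl)
  rcases huw with rfl | huw
  · exact Or.inr (Or.inr rfl)
  exact hG u v w huv hvw huw

end Colouring

end SimpleGraph

open SimpleGraph

theorem rainbow_triangle_general {V : Type*}
    (G : SimpleGraph V)
    (c : V → Fin 3) (hc : Function.Surjective c)
    (hconn : ∀ i j : Fin 3, i ≠ j →
      (SimpleGraph.fromRel (fun u v => G.Adj u v ∧
        ¬((c u = i ∧ c v = j) ∨ (c u = j ∧ c v = i)))).Connected)
    (hdom : ∀ D : Finset V, (∀ v : V, ∃ u ∈ D, Gᶜ.Adj v u) → 5 ≤ D.card) :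
    ∃ u v w : V, G.Adj u v ∧ G.Adj v w ∧ G.Adj u w ∧
      c u ≠ c v ∧ c v ≠ c w ∧ c u ≠ c w := by
  by_contra! hnone
  have hconn' : ∀ i j, i ≠ j → (G.deleteColourPair c i j).Connected := hconn
  have hf : G.IsCocycle fun u v => colourPairWeight 0 1 (c u) (c v) :=
    isCocycle_colourPairWeight (by decide) fun u v w huv hvw huw => by
      by_contra! h
      exact h.2.2 (hnone u v w huv hvw huw h.1 h.2.1)
  have h4 (s : Finset V) (hs : #s ≤ 4) : ∃ z, ∀ u ∈ s, u = z ∨ G.Adj u z :=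
    exists_forall_eq_or_adj_of_card_lt hdom (by omega)
  obtain ⟨a, ha⟩ := hc 0
  obtain ⟨b, hb⟩ := hc 1
  obtain ⟨x, y, hxy, hx, hy₀, hy₂⟩ :=
    exists_adj_of_connected_deleteColourPair (b := b) (hconn' 0 2 (by decide)) ha (by simp [hb])
  have hy : c y = 1 := by omega
  obtain ⟨p⟩ := (hconn' 0 1 (by decide)).preconnected y x
  have hp := p.weightSum_eq_zero _ fun _ _ => colourPairWeight_eq_zero_of_adj
  have hcycle :=
    hf.weightSum_eq_zero_of_closed h4 (.cons hxy (p.mapLe (deleteColourPair_le G c 0 1)))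
  rw [Walk.weightSum_cons, Walk.weightSum_mapLe, hp, hx, hy] at hcycle
  exact absurd hcycle (by decide)

/-- Rainbow triangles in three-coloured graphs: if deleting the edges between any two
fixed colours leaves the graph connected, and the total domination number of the
complement is at least `5`, then there is a triangle with all three colours. -/
theorem rainbow_triangle {V : Type*} [Fintype V] [DecidableEq V]
    (G : SimpleGraph V)
    (c : V → Fin 3) (hc : Function.Surjective c)
    (hconn : ∀ i j : Fin 3, i ≠ j →
      (SimpleGraph.fromRel (fun u v => G.Adj u v ∧
        ¬((c u = i ∧ c v = j) ∨ (c u = j ∧ c v = i)))).Connected)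
    (hdom : ∀ D : Finset V, (∀ v : V, ∃ u ∈ D, Gᶜ.Adj v u) → 5 ≤ D.card) :
    ∃ u v w : V, G.Adj u v ∧ G.Adj v w ∧ G.Adj u w ∧
      c u ≠ c v ∧ c v ≠ c w ∧ c u ≠ c w :=
  rainbow_triangle_general G c hc hconn hdom
end

section
/- Let K be a simplicial complex whose vertex set is partitioned into V_0,…,V_m, let F be a field, and let v be a vertex that is an isolated point within its own colour class (i.e., no edge of K joins v to another vertex of the same colour). If H̃_{|S|-2}(K_S, F) = 0 for every nonempty S ⊆ {0,…,m}, then there exists a rainbow simplex of K containing v. -/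
open Finset

variable (R : Type*) [CommRing R] (A : Type*) [AddCommGroup A] [Module R A]
variable (V : Type*) [LinearOrder V]

/-!
From the vanishing of `H̃_{|S|-2}(K_S)` one builds, by induction on `|S|`, chains `W S` of
`(|S|-1)`-faces of `K_S` with `∂ (W S) = ∑ ±W (S \ {i})` and `W {c v} = [v]`: a chain map from the
full simplex on the colours into `K`. Contraction by `v` (deleting `v`, with a sign, from the faces
containing it) anticommutes with `∂`, and since `v` is alone in its colour class, the contraction
of `W S` is carried by faces coloured by `S \ {c v}`. The colouring induces a chain map to the
simplex on the colours, which sends this contraction to `μ S • [S \ {c v}]`; comparing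
coefficients of `∂` gives `μ S = ±μ (S \ {i})` for `i ≠ c v`, so `μ univ = ±μ {c v} = ±1 ≠ 0`.
A face of `W univ` through `v` with nonzero contribution to `μ univ` is rainbow.
-/

theorem Finset.sum_sum_eq_zero_of_antisymm {ι M : Type*} [AddCommGroup M] (s : Finset ι)
    (f : ι → ι → M) (hf : ∀ a b, f a b = -f b a) (hdiag : ∀ a, f a a = 0) :
    ∑ a ∈ s, ∑ b ∈ s, f a b = 0 := by
  rw [← Finset.sum_product']
  refine Finset.sum_involution (fun p _ => p.swap) (fun p _ => by simp [hf p.1 p.2])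
    (fun p _ hp h => hp ?_) (fun p hp => by simpa [and_comm] using hp) (fun p _ => rfl)
  obtain ⟨a, b⟩ := p
  obtain rfl : b = a := congrArg Prod.fst h
  exact hdiag b

theorem Finset.image_erase_of_injOn {α β : Type*} [DecidableEq α] [DecidableEq β] {c : α → β}
    {s : Finset α} (hc : Set.InjOn c s) {a : α} (ha : a ∈ s) :
    (s.erase a).image c = (s.image c).erase (c a) := by
  rw [← sdiff_singleton_eq_erase, image_sdiff_of_injOn hc (singleton_subset_iff.2 ha),
    image_singleton, sdiff_singleton_eq_erase]

theorem Finset.image_erase_eq_image {α β : Type*} [DecidableEq α] [DecidableEq β] {c : α → β}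
    {s : Finset α} {a b : α} (hb : b ∈ s) (hba : b ≠ a) (hcb : c b = c a) :
    (s.erase a).image c = s.image c := by
  refine (image_subset_image (erase_subset a s)).antisymm fun j hj => ?_
  obtain ⟨x, hx, rfl⟩ := mem_image.1 hj
  rcases eq_or_ne x a with rfl | hxa
  · exact mem_image.2 ⟨b, mem_erase.2 ⟨hba, hb⟩, hcb⟩
  · exact mem_image_of_mem c (mem_erase.2 ⟨hxa, hx⟩)

theorem Finset.exists_twin_of_not_injOn {α β : Type*} [DecidableEq α] {c : α → β} {s : Finset α}
    {p : α} (hp : p ∈ s) (hc : ¬ Set.InjOn c s) (hinj : Set.InjOn c (s.erase p)) :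
    ∃ q ∈ s, q ≠ p ∧ ∀ x ∈ s, c x = c p ↔ x = p ∨ x = q := by
  obtain ⟨q, hqs, hqp, hcq⟩ : ∃ q ∈ s, q ≠ p ∧ c q = c p := by
    by_contra! h
    refine hc fun x hx y hy hxy => ?_
    rcases eq_or_ne x p with rfl | hxp
    · by_contra hyx
      exact h y hy (Ne.symm hyx) hxy.symm
    rcases eq_or_ne y p with rfl | hyp
    · exact absurd hxy (h x hx hxp)
    exact hinj (mem_erase.2 ⟨hxp, hx⟩) (mem_erase.2 ⟨hyp, hy⟩) hxy
  refine ⟨q, hqs, hqp, fun x hx => ⟨fun hxc => ?_, ?_⟩⟩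
  · by_contra! h'
    exact h'.2 (hinj (mem_erase.2 ⟨h'.1, hx⟩) (mem_erase.2 ⟨hqp, hqs⟩) (hxc.trans hcq.symm))
  · rintro (rfl | rfl)
    exacts [rfl, hcq]

theorem Finset.injOn_erase_of_twin {α β : Type*} [DecidableEq α] {c : α → β} {s : Finset α}
    {p q : α} (hinj : Set.InjOn c (s.erase p)) (hcol : ∀ x ∈ s, c x = c p ↔ x = p ∨ x = q) :
    Set.InjOn c (s.erase q) := fun x hx y hy hxy => by
  obtain ⟨hxq, hxs⟩ := mem_erase.1 hx
  obtain ⟨hyq, hys⟩ := mem_erase.1 hy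
  rcases eq_or_ne x p with rfl | hxp
  · exact (((hcol y hys).1 hxy.symm).resolve_right hyq).symm
  rcases eq_or_ne y p with rfl | hyp
  · exact ((hcol x hxs).1 hxy).resolve_right hxq
  · exact hinj (mem_erase.2 ⟨hxp, hxs⟩) (mem_erase.2 ⟨hyp, hys⟩) hxy

namespace FinsetChain

section

variable {α β : Type*} [LinearOrder α] [LinearOrder β] {R : Type*} [CommRing R]

def eraseSign (s : Finset α) (a : α) : R := (-1) ^ #{x ∈ s | x < a}

theorem eraseSign_erase_of_lt {s : Finset α} {a b : α} (ha : a ∈ s) (hab : a < b) :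
    (eraseSign s b : R) = -eraseSign (s.erase a) b := by
  have hmem : a ∈ {x ∈ s | x < b} := mem_filter.2 ⟨ha, hab⟩
  have hcard : #{x ∈ s | x < b} = #{x ∈ s.erase a | x < b} + 1 := by
    rw [filter_erase, card_erase_of_mem hmem, Nat.sub_add_cancel (card_pos.2 ⟨a, hmem⟩)]
  rw [eraseSign, eraseSign, hcard, pow_succ, mul_neg_one]

theorem eraseSign_erase_of_le {s : Finset α} {a b : α} (hba : b ≤ a) :
    (eraseSign (s.erase a) b : R) = eraseSign s b := by
  rw [eraseSign, eraseSign, filter_erase, erase_eq_of_notMem (by simp [hba])]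

-- Chains are finitely supported functions on all finite vertex sets, the empty one included, so
-- `boundary` is the augmented boundary and the grading by cardinality stays implicit.
noncomputable def contract (a : α) : (Finset α →₀ R) →ₗ[R] (Finset α →₀ R) :=
  Finsupp.lsum R fun s => if a ∈ s then (eraseSign s a : R) • Finsupp.lsingle (s.erase a) else 0

theorem contract_single (a : α) (s : Finset α) (r : R) :
    contract a (Finsupp.single s r) =
      if a ∈ s then Finsupp.single (s.erase a) (eraseSign s a * r) else 0 := by
  by_cases h : a ∈ s <;> simp [contract, h, Finsupp.smul_single, -Finsupp.single_mul]

theorem contract_single_of_notMem {a : α} {s : Finset α} (h : a ∉ s) (r : R) :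
    contract a (Finsupp.single s r) = 0 := by
  rw [contract_single, if_neg h]

theorem contract_contract_self (a : α) (x : Finset α →₀ R) : contract a (contract a x) = 0 := by
  induction x using Finsupp.induction_linear with
  | zero => simp
  | add x y hx hy => simp [hx, hy]
  | single s r => by_cases h : a ∈ s <;> simp [contract_single, h, -Finsupp.single_mul]

theorem contract_contract (a b : α) (x : Finset α →₀ R) :
    contract a (contract b x) = -contract b (contract a x) := by
  rcases eq_or_ne a b with rfl | hab
  · simp [contract_contract_self]
  wlog hlt : a < b generalizing a b
  · rw [this b a hab.symm (hab.symm.lt_of_le (not_lt.1 hlt)), neg_neg]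
  induction x using Finsupp.induction_linear with
  | zero => simp
  | add x y hx hy => simp [hx, hy, add_comm]
  | single s r =>
    by_cases ha : a ∈ s
    swap
    · by_cases hb : b ∈ s <;> simp [contract_single, ha, hb, -Finsupp.single_mul]
    by_cases hb : b ∈ s
    swap
    · simp [contract_single, ha, hb, -Finsupp.single_mul]
    simp only [contract_single, ha, hb, mem_erase, ne_eq, hab, hab.symm, not_false_eq_true,
      and_self, ↓reduceIte]
    rw [erase_right_comm, ← Finsupp.single_neg, eraseSign_erase_of_le hlt.le,
      eraseSign_erase_of_lt ha hlt]
    congr 1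
    ring

theorem exists_of_mem_support_contract {a : α} {x : Finset α →₀ R} {t : Finset α}
    (ht : t ∈ (contract a x).support) : ∃ s ∈ x.support, a ∈ s ∧ t = s.erase a := by
  rw [← Finsupp.sum_single x, Finsupp.sum, map_sum] at ht
  obtain ⟨s, hs, ht⟩ := Finsupp.mem_support_finsetSum t ht
  rw [contract_single] at ht
  split_ifs at ht with has
  · exact ⟨s, hs, has, by simpa using Finsupp.support_single_subset ht⟩
  · simp at ht

theorem contract_mem_supported {a : α} {S : Set (Finset α)} (hS : ∀ s ∈ S, s.erase a ∈ S)
    {x : Finset α →₀ R} (hx : x ∈ Finsupp.supported R R S) :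
    contract a x ∈ Finsupp.supported R R S := fun t ht => by
  obtain ⟨s, hs, -, rfl⟩ := exists_of_mem_support_contract ht
  exact hS s (hx hs)

theorem contract_single_mem_supported (a : α) (s : Finset α) (r : R) :
    contract a (Finsupp.single s r) ∈ Finsupp.supported R R {t | t ⊆ s} :=
  contract_mem_supported (fun t (ht : t ⊆ s) => (erase_subset a t).trans ht)
    (Finsupp.single_mem_supported R r (subset_refl s))

noncomputable def boundary : (Finset α →₀ R) →ₗ[R] (Finset α →₀ R) :=
  Finsupp.lsum R fun s => ∑ a ∈ s, (contract a).comp (Finsupp.lsingle s)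

theorem boundary_single_eq_sum_contract (s : Finset α) (r : R) :
    boundary (Finsupp.single s r) = ∑ a ∈ s, contract a (Finsupp.single s r) := by
  simp [boundary]

theorem boundary_single (s : Finset α) (r : R) :
    boundary (Finsupp.single s r) =
      ∑ a ∈ s, Finsupp.single (s.erase a) (eraseSign s a * r) := by
  rw [boundary_single_eq_sum_contract]
  exact sum_congr rfl fun a ha => by rw [contract_single, if_pos ha]

theorem boundary_single_apply_erase {s : Finset α} {a : α} (ha : a ∈ s) (r : R) :
    boundary (Finsupp.single s r) (s.erase a) = eraseSign s a * r := by
  rw [boundary_single, Finsupp.finsetSum_apply, sum_eq_single a]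
  · exact Finsupp.single_eq_same
  · intro b hb hba
    exact Finsupp.single_eq_of_ne fun h => hba ((erase_inj s ha).1 h).symm
  · exact fun h => absurd ha h

theorem boundary_eq_sum_contract {τ : Finset α} {x : Finset α →₀ R}
    (hx : x ∈ Finsupp.supported R R {s | s ⊆ τ}) : boundary x = ∑ a ∈ τ, contract a x := by
  rw [← Finsupp.sum_single x, Finsupp.sum, map_sum]
  simp only [map_sum]
  rw [sum_comm]
  refine sum_congr rfl fun s hs => ?_
  rw [boundary_single_eq_sum_contract]
  exact sum_subset (hx hs) fun a _ ha => contract_single_of_notMem ha _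

theorem boundary_single_mem_supported (s : Finset α) (r : R) :
    boundary (Finsupp.single s r) ∈ Finsupp.supported R R {t | t ⊆ s} := by
  rw [boundary_single_eq_sum_contract]
  exact Submodule.sum_mem _ fun a _ => contract_single_mem_supported a s r

theorem exists_eq_erase_of_mem_support_boundary_single {s t : Finset α} {r : R}
    (ht : t ∈ (boundary (Finsupp.single s r)).support) : ∃ a ∈ s, t = s.erase a := by
  rw [boundary_single_eq_sum_contract] at ht
  obtain ⟨a, ha, ht⟩ := Finsupp.mem_support_finsetSum t ht
  obtain ⟨s', hs', -, rfl⟩ := exists_of_mem_support_contract ht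
  obtain rfl := mem_singleton.1 (Finsupp.support_single_subset hs')
  exact ⟨a, ha, rfl⟩

theorem boundary_boundary (x : Finset α →₀ R) : boundary (boundary x) = 0 := by
  induction x using Finsupp.induction_linear with
  | zero => simp
  | add x y hx hy => simp [hx, hy]
  | single s r =>
    rw [boundary_eq_sum_contract (boundary_single_mem_supported s r),
      boundary_single_eq_sum_contract]
    simp only [map_sum]
    exact sum_sum_eq_zero_of_antisymm s _ (fun a b => contract_contract a b _)
      (fun a => contract_contract_self a _)

theorem contract_boundary (a : α) (x : Finset α →₀ R) :
    contract a (boundary x) = -boundary (contract a x) := by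
  induction x using Finsupp.induction_linear with
  | zero => simp
  | add x y hx hy => simp [hx, hy, add_comm]
  | single s r =>
    rw [boundary_eq_sum_contract (contract_single_mem_supported a s r),
      boundary_single_eq_sum_contract, map_sum, ← sum_neg_distrib]
    exact sum_congr rfl fun b _ => contract_contract a b _

def invCount (c : α → β) (s : Finset α) : ℕ := ∑ x ∈ s, #{y ∈ s | x < y ∧ c y < c x}

theorem invCount_eq_invCount_erase_add (c : α → β) {s : Finset α} {a : α} (ha : a ∈ s) :
    invCount c s = invCount c (s.erase a) + #{x ∈ s | x < a ∧ c a < c x}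
      + #{x ∈ s | a < x ∧ c x < c a} := by
  let g : α → α → ℕ := fun x y => if x < y ∧ c y < c x then 1 else 0
  have hcount : ∀ t : Finset α, invCount c t = ∑ x ∈ t, ∑ y ∈ t, g x y := fun t => by
    simp only [invCount, card_filter, g]
  calc invCount c s = ∑ y ∈ s, g a y + ∑ x ∈ s.erase a, (g x a + ∑ y ∈ s.erase a, g x y) := by
        rw [hcount, ← add_sum_erase s _ ha]
        exact congrArg _ (sum_congr rfl fun x _ => (add_sum_erase s _ ha).symm)
    _ = _ := by
        rw [sum_add_distrib, sum_erase s (f := fun x => g x a) (by simp [g]), hcount]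
        simp only [card_filter, g]
        ring

def invSign (c : α → β) (s : Finset α) : R := (-1) ^ invCount c s

theorem eraseSign_mul_invSign_erase (c : α → β) {s : Finset α} {a : α} (ha : a ∈ s) :
    (eraseSign s a : R) * invSign c (s.erase a) =
      invSign c s * (-1) ^ #{x ∈ s | c x < c a} * (-1) ^ #{x ∈ s | x < a ∧ c x = c a} := by
  have hinv := invCount_eq_invCount_erase_add c ha
  have hsplit : #{x ∈ s | x < a} + #{x ∈ s | a < x ∧ c x < c a} =
      #{x ∈ s | x < a ∧ c a < c x} + #{x ∈ s | c x < c a} + #{x ∈ s | x < a ∧ c x = c a} := by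
    simp only [card_filter, ← sum_add_distrib]
    refine sum_congr rfl fun x _ => ?_
    split_ifs <;> grind
  rw [eraseSign, invSign, invSign, ← pow_add, ← pow_add, ← pow_add,
    show invCount c s + #{x ∈ s | c x < c a} + #{x ∈ s | x < a ∧ c x = c a} =
      #{x ∈ s | x < a} + invCount c (s.erase a) + 2 * #{x ∈ s | a < x ∧ c x < c a} by omega,
    pow_add _ _ (2 * _), pow_mul]
  simp

-- The chain map induced by `c`; `invSign c s` is the sign of the permutation by which `c`
-- reorders the vertices of `s`.
open scoped Classical in
noncomputable def pushforward (c : α → β) : (Finset α →₀ R) →ₗ[R] (Finset β →₀ R) :=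
  Finsupp.lsum R fun s =>
    if Set.InjOn c s then (invSign c s : R) • Finsupp.lsingle (s.image c) else 0

open scoped Classical in
theorem pushforward_single (c : α → β) (s : Finset α) (r : R) :
    pushforward c (Finsupp.single s r) =
      if Set.InjOn c s then Finsupp.single (s.image c) (invSign c s * r) else 0 := by
  by_cases h : Set.InjOn c s <;>
    simp [pushforward, h, Finsupp.smul_single, -Finsupp.single_mul]

theorem exists_of_mem_support_pushforward {c : α → β} {x : Finset α →₀ R} {t : Finset β}
    (ht : t ∈ (pushforward c x).support) : ∃ s ∈ x.support, Set.InjOn c s ∧ t = s.image c := by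
  rw [← Finsupp.sum_single x, Finsupp.sum, map_sum] at ht
  obtain ⟨s, hs, ht⟩ := Finsupp.mem_support_finsetSum t ht
  rw [pushforward_single] at ht
  split_ifs at ht with hinj
  · exact ⟨s, hs, hinj, by simpa using Finsupp.support_single_subset ht⟩
  · simp at ht

theorem pushforward_boundary_single_of_injOn {c : α → β} {s : Finset α} (hc : Set.InjOn c s)
    (r : R) :
    pushforward c (boundary (Finsupp.single s r)) =
      boundary (pushforward c (Finsupp.single s r)) := by
  rw [pushforward_single, if_pos hc, boundary_single, boundary_single, map_sum,
    sum_image fun x hx y hy h => hc hx hy h]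
  refine sum_congr rfl fun a ha => ?_
  rw [pushforward_single, if_pos (hc.mono (coe_subset.2 (erase_subset a s))),
    image_erase_of_injOn hc ha]
  congr 1
  have hsign := eraseSign_mul_invSign_erase (R := R) c ha
  have hlow : #{x ∈ s | c x < c a} = #{j ∈ s.image c | j < c a} := by
    rw [filter_image, card_image_of_injOn (hc.mono (coe_subset.2 (filter_subset _ s)))]
  have hnone : #{x ∈ s | x < a ∧ c x = c a} = 0 := by
    rw [card_eq_zero, filter_eq_empty_iff]
    rintro x hx ⟨hlt, heq⟩
    exact hlt.ne (hc hx ha heq)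
  rw [hlow, hnone, pow_zero, mul_one] at hsign
  simp only [eraseSign] at hsign ⊢
  linear_combination r * hsign

theorem eraseSign_mul_invSign_erase_add_eq_zero (c : α → β) {s : Finset α} {p q : α}
    (hp : p ∈ s) (hq : q ∈ s) (hpq : p < q) (hcol : ∀ x ∈ s, c x = c p ↔ x = p ∨ x = q) :
    (eraseSign s p : R) * invSign c (s.erase p) + eraseSign s q * invSign c (s.erase q) = 0 := by
  have hcq : c q = c p := (hcol q hq).2 (Or.inr rfl)
  have hbelow_p : #{x ∈ s | x < p ∧ c x = c p} = 0 := by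
    rw [card_eq_zero, filter_eq_empty_iff]
    rintro x hx ⟨hlt, heq⟩
    rcases (hcol x hx).1 heq with rfl | rfl
    exacts [lt_irrefl x hlt, lt_asymm hlt hpq]
  have hbelow_q : #{x ∈ s | x < q ∧ c x = c q} = 1 := by
    rw [card_eq_one]
    refine ⟨p, eq_singleton_iff_unique_mem.2 ⟨by simp [hp, hpq, hcq], fun x hx => ?_⟩⟩
    rw [mem_filter, hcq] at hx
    rcases (hcol x hx.1).1 hx.2.2 with rfl | rfl
    exacts [rfl, (lt_irrefl x hx.2.1).elim]
  rw [eraseSign_mul_invSign_erase c hp, eraseSign_mul_invSign_erase c hq, hbelow_p, hbelow_q,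
    hcq]
  ring

theorem pushforward_boundary_single_of_not_injOn {c : α → β} {s : Finset α}
    (hc : ¬ Set.InjOn c s) (r : R) :
    pushforward c (boundary (Finsupp.single s r)) = 0 := by
  rw [boundary_single, map_sum]
  by_cases hp : ∃ p ∈ s, Set.InjOn c (s.erase p)
  swap
  · push Not at hp
    exact sum_eq_zero fun a ha => by rw [pushforward_single, if_neg (hp a ha)]
  obtain ⟨p, hps, hinj_p⟩ := hp
  obtain ⟨q, hqs, hqp, hcol⟩ := exists_twin_of_not_injOn hps hc hinj_p
  have hcq : c q = c p := (hcol q hqs).2 (Or.inr rfl)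
  have hinj_q := injOn_erase_of_twin hinj_p hcol
  -- Only the faces omitting `p` or `q` can be mapped injectively, and their terms cancel.
  have hrest : ∀ a ∈ s, a ∉ ({p, q} : Finset α) →
      pushforward c (Finsupp.single (s.erase a) (eraseSign s a * r)) = 0 := by
    intro a _ ha
    rw [pushforward_single, if_neg fun hinj => ?_]
    simp only [mem_insert, mem_singleton, not_or] at ha
    exact hqp (hinj (mem_erase.2 ⟨Ne.symm ha.2, hqs⟩) (mem_erase.2 ⟨Ne.symm ha.1, hps⟩) hcq)
  rw [← sum_subset (insert_subset_iff.2 ⟨hps, singleton_subset_iff.2 hqs⟩) hrest,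
    sum_pair hqp.symm, pushforward_single, pushforward_single, if_pos hinj_p, if_pos hinj_q,
    image_erase_eq_image hqs hqp hcq, image_erase_eq_image hps hqp.symm hcq.symm,
    ← Finsupp.single_add]
  suffices hcoef : invSign c (s.erase p) * (eraseSign s p * r)
      + invSign c (s.erase q) * (eraseSign s q * r) = (0 : R) by
    rw [hcoef, Finsupp.single_zero]
  rcases lt_or_gt_of_ne hqp with hlt | hlt
  · have hcol' : ∀ x ∈ s, c x = c q ↔ x = q ∨ x = p := fun x hx => by
      rw [hcq, or_comm]; exact hcol x hx
    linear_combination r * eraseSign_mul_invSign_erase_add_eq_zero (R := R) c hqs hps hlt hcol'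
  · linear_combination r * eraseSign_mul_invSign_erase_add_eq_zero (R := R) c hps hqs hlt hcol

theorem pushforward_boundary (c : α → β) (x : Finset α →₀ R) :
    pushforward c (boundary x) = boundary (pushforward c x) := by
  induction x using Finsupp.induction_linear with
  | zero => simp
  | add x y hx hy => simp [hx, hy]
  | single s r =>
    by_cases hc : Set.InjOn c s
    · exact pushforward_boundary_single_of_injOn hc r
    · rw [pushforward_boundary_single_of_not_injOn hc, pushforward_single, if_neg hc, map_zero]

end

section

variable {V : Type*} [LinearOrder V] {R : Type*} [CommRing R]

noncomputable def ofChains (n : ℕ) : Chains R V n →ₗ[R] (Finset V →₀ R) :=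
  Finsupp.lmapDomain R R Subtype.val

theorem ofChains_single (n : ℕ) (s : {s : Finset V // s.card = n + 1}) (r : R) :
    ofChains n (Finsupp.single s r) = Finsupp.single s.1 r := by
  simp [ofChains]

theorem ofChains_injective (n : ℕ) : Function.Injective (ofChains n : Chains R V n → _) :=
  Finsupp.mapDomain_injective Subtype.val_injective

theorem map_ofChains_chainsIn (S : Set (Finset V)) (n : ℕ) :
    (chainsIn R R V S n).map (ofChains n) =
      Finsupp.supported R R {s | s ∈ S ∧ s.card = n + 1} := by
  rw [chainsIn, ofChains, Finsupp.lmapDomain_supported]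
  congr 1
  ext s
  simp [and_comm]

theorem ofChains_bdry (n : ℕ) (w : Chains R V (n + 1)) :
    ofChains n (bdry R R V n w) = boundary (ofChains (n + 1) w) := by
  induction w using Finsupp.induction_linear with
  | zero => simp
  | add x y hx hy => simp only [map_add, hx, hy]
  | single s r =>
    rw [ofChains_single, boundary_single, bdry, Finsupp.lsum_single, LinearMap.sum_apply,
      map_sum, ← sum_attach s.1]
    refine sum_congr rfl fun a _ => ?_
    rw [LinearMap.smul_apply, Finsupp.lsingle_apply, map_zsmul, ofChains_single,
      Finsupp.smul_single, zsmul_eq_mul]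
    simp [eraseSign]

theorem boundary_ofChains_apply_empty (z : Chains R V 0) :
    boundary (ofChains 0 z) ∅ = aug R R V z := by
  induction z using Finsupp.induction_linear with
  | zero => simp
  | add x y hx hy => simp only [map_add, Finsupp.add_apply, hx, hy]
  | single s r =>
    obtain ⟨x, hx⟩ := card_eq_one.1 s.2
    rw [ofChains_single, boundary_single, aug, Finsupp.lsum_single, LinearMap.id_apply, hx]
    simp [eraseSign, filter_singleton]

theorem exists_boundary_eq_of_subsingleton_redH {S : Set (Finset V)} {k : ℕ}
    (hH : Subsingleton (redH R R V S k)) {z : Finset V →₀ R}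
    (hz : z ∈ Finsupp.supported R R {s | s ∈ S ∧ s.card = k + 1}) (hcyc : boundary z = 0) :
    ∃ w ∈ Finsupp.supported R R {s | s ∈ S ∧ s.card = k + 2}, boundary w = z := by
  rw [← map_ofChains_chainsIn] at hz
  obtain ⟨zc, hzc, rfl⟩ := Submodule.mem_map.1 hz
  have hcycle : zc ∈ cyclesIn R R V S k := by
    refine ⟨?_, hzc⟩
    cases k with
    | zero =>
      rw [SetLike.mem_coe, cycles, LinearMap.mem_ker, ← boundary_ofChains_apply_empty, hcyc]
      rfl
    | succ k =>
      rw [SetLike.mem_coe, cycles, LinearMap.mem_ker]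
      exact ofChains_injective k (by rw [ofChains_bdry, hcyc, map_zero])
  have hbounds := (Submodule.Quotient.mk_eq_zero _).1
    (hH.elim (Submodule.Quotient.mk (⟨zc, hcycle⟩ : cyclesIn R R V S k) :
      redH R R V S k) 0)
  obtain ⟨w, hw, hbw⟩ := Submodule.mem_map.1 hbounds
  refine ⟨ofChains (k + 1) w, ?_, by rw [← ofChains_bdry, hbw]; rfl⟩
  rw [← map_ofChains_chainsIn]
  exact Submodule.mem_map_of_mem hw

end

section

variable {V J : Type*} [LinearOrder J] {R : Type*} [CommRing R]

theorem linearCombination_boundary_single (W : Finset J → Finset V →₀ R) (S : Finset J)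
    (r : R) :
    Finsupp.linearCombination R W (boundary (Finsupp.single S r)) =
      ∑ i ∈ S, (eraseSign S i * r) • W (S.erase i) := by
  simp [boundary_single, Finsupp.linearCombination_single, -Finsupp.single_mul]

theorem linearCombination_boundary_single_congr {W W' : Finset J → Finset V →₀ R}
    {S : Finset J} (h : ∀ i ∈ S, W' (S.erase i) = W (S.erase i)) (r : R) :
    Finsupp.linearCombination R W' (boundary (Finsupp.single S r)) =
      Finsupp.linearCombination R W (boundary (Finsupp.single S r)) := by
  simp only [linearCombination_boundary_single]
  exact sum_congr rfl fun i hi => by rw [h i hi]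

variable [LinearOrder V]

theorem boundary_linearCombination {W : Finset J → Finset V →₀ R} {y : Finset J →₀ R}
    (hW : ∀ T ∈ y.support, boundary (W T) =
      Finsupp.linearCombination R W (boundary (Finsupp.single T 1))) :
    boundary (Finsupp.linearCombination R W y) =
      Finsupp.linearCombination R W (boundary y) := by
  rw [← Finsupp.sum_single y]
  simp only [Finsupp.sum, map_sum]
  refine sum_congr rfl fun T hT => ?_
  rw [Finsupp.linearCombination_single, map_smul, hW T hT, ← map_smul, ← map_smul,
    Finsupp.smul_single, smul_eq_mul, mul_one]

end

end FinsetChain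

open FinsetChain

section Filling

variable {V J : Type*} [LinearOrder V] [LinearOrder J] {R : Type*} [CommRing R]

def colourRestrict (K : Set (Finset V)) (c : V → J) (S : Finset J) : Set (Finset V) :=
  {s ∈ K | ∀ w ∈ s, c w ∈ S}

-- `H̃_{|S|-2}(K_S) = 0` for `|S| ≥ 2`, where `K_S = colourRestrict K c S`.
variable (R) in
def ColourAcyclic (K : Set (Finset V)) (c : V → J) : Prop :=
  ∀ (S : Finset J) (k : ℕ), S.card = k + 2 →
    ∀ z ∈ Finsupp.supported R R {s | s ∈ colourRestrict K c S ∧ s.card = k + 1}, boundary z = 0 →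
      ∃ w ∈ Finsupp.supported R R {s | s ∈ colourRestrict K c S ∧ s.card = k + 2},
        boundary w = z

def colourCarrier (K : Set (Finset V)) (c : V → J) (S : Finset J) : Set (Finset V) :=
  {s | s.card = S.card ∧ (S.Nonempty → s ∈ colourRestrict K c S)}

-- On the faces of `S`, `W` is a chain map from the simplex on `J` to `K`, carried by `S ↦ K_S`.
def IsFillingAt (K : Set (Finset V)) (c : V → J) (W : Finset J → Finset V →₀ R)
    (S : Finset J) : Prop :=
  W S ∈ Finsupp.supported R R (colourCarrier K c S) ∧
    boundary (W S) = Finsupp.linearCombination R W (boundary (Finsupp.single S 1))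

variable {K : Set (Finset V)} {c : V → J}

theorem linearCombination_boundary_single_mem_supported {W : Finset J → Finset V →₀ R}
    {S : Finset J} {k : ℕ} (hS : S.card = k + 2) (hW : ∀ i ∈ S, IsFillingAt K c W (S.erase i)) :
    Finsupp.linearCombination R W (boundary (Finsupp.single S 1)) ∈
      Finsupp.supported R R {s | s ∈ colourRestrict K c S ∧ s.card = k + 1} := by
  rw [linearCombination_boundary_single]
  refine Submodule.sum_mem _ fun i hi => Submodule.smul_mem _ _ ?_
  refine Finsupp.supported_mono ?_ (hW i hi).1
  rintro s ⟨hcard, hsK⟩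
  rw [card_erase_of_mem hi, hS] at hcard
  obtain ⟨hs, hcol⟩ := hsK (card_pos.1 (by rw [card_erase_of_mem hi]; omega))
  exact ⟨⟨hs, fun w hw => mem_of_mem_erase (hcol w hw)⟩, hcard⟩

theorem boundary_linearCombination_boundary_single {W : Finset J → Finset V →₀ R}
    {S : Finset J} (hW : ∀ i ∈ S, IsFillingAt K c W (S.erase i)) :
    boundary (Finsupp.linearCombination R W (boundary (Finsupp.single S 1))) = 0 := by
  rw [boundary_linearCombination, boundary_boundary, map_zero]
  intro T hT
  obtain ⟨i, hi, rfl⟩ := exists_eq_erase_of_mem_support_boundary_single hT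
  exact (hW i hi).2

theorem exists_boundary_eq_linearCombination (hK : ColourAcyclic R K c)
    {W : Finset J → Finset V →₀ R} {S : Finset J} {k : ℕ} (hS : S.card = k + 2)
    (hW : ∀ i ∈ S, IsFillingAt K c W (S.erase i)) :
    ∃ w ∈ Finsupp.supported R R (colourCarrier K c S),
      boundary w = Finsupp.linearCombination R W (boundary (Finsupp.single S 1)) := by
  obtain ⟨w, hw, hbw⟩ := hK S k hS _ (linearCombination_boundary_single_mem_supported hS hW)
    (boundary_linearCombination_boundary_single hW)
  refine ⟨w, Finsupp.supported_mono ?_ hw, hbw⟩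
  rintro s ⟨hs, hcard⟩
  exact ⟨by rw [hcard, hS], fun _ => hs⟩

theorem exists_isFillingAt_succ (hK : ColourAcyclic R K c) {n : ℕ} (hn : 1 ≤ n)
    {W : Finset J → Finset V →₀ R} (hW : ∀ S : Finset J, S.card ≤ n → IsFillingAt K c W S) :
    ∃ W' : Finset J → Finset V →₀ R, (∀ S : Finset J, S.card ≤ n → W' S = W S) ∧
      ∀ S : Finset J, S.card ≤ n + 1 → IsFillingAt K c W' S := by
  have hnew : ∀ S : Finset J, S.card = n + 1 → ∃ w ∈ Finsupp.supported R R (colourCarrier K c S),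
      boundary w = Finsupp.linearCombination R W (boundary (Finsupp.single S 1)) := by
    intro S hS
    obtain ⟨k, rfl⟩ : ∃ k, n = k + 1 := ⟨n - 1, by omega⟩
    exact exists_boundary_eq_linearCombination hK hS fun i hi =>
      hW _ (by rw [card_erase_of_mem hi]; omega)
  choose! f hf using hnew
  set W' : Finset J → Finset V →₀ R := fun S => if S.card = n + 1 then f S else W S
  have hlow : ∀ T : Finset J, T.card ≤ n → W' T = W T := fun T hT => if_neg (by omega)
  refine ⟨W', hlow, fun S hS => ?_⟩
  have hfaces : ∀ i ∈ S, W' (S.erase i) = W (S.erase i) := fun i hi =>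
    hlow _ (by rw [card_erase_of_mem hi]; omega)
  rw [IsFillingAt, linearCombination_boundary_single_congr hfaces]
  rcases hS.lt_or_eq with hS | hS
  · rw [hlow S (by omega)]
    exact hW S (by omega)
  · rw [show W' S = f S from if_pos hS]
    exact hf S hS

theorem exists_isFillingAt_of_card_le_one (r : J → V) (hr : ∀ i, c (r i) = i)
    (hrK : ∀ i, {r i} ∈ K) :
    ∃ W : Finset J → Finset V →₀ R, (∀ i, W {i} = Finsupp.single {r i} 1) ∧
      ∀ S : Finset J, S.card ≤ 1 → IsFillingAt K c W S := by
  refine ⟨fun S => if S.card ≤ 1 then Finsupp.single (S.image r) 1 else 0, fun i => by simp,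
    fun S hS => ?_⟩
  rcases Nat.le_one_iff_eq_zero_or_eq_one.1 hS with hS | hS
  · obtain rfl := card_eq_zero.1 hS
    refine ⟨Finsupp.single_mem_supported R (1 : R) ?_, ?_⟩ <;> simp [colourCarrier, boundary_single]
  · obtain ⟨i, rfl⟩ := card_eq_one.1 hS
    refine ⟨Finsupp.single_mem_supported R _ ?_,
      by simp [boundary_single, eraseSign, filter_singleton]⟩
    simp [colourCarrier, colourRestrict, hr, hrK]

theorem exists_isFillingAt [Fintype J] (hK : ColourAcyclic R K c) (r : J → V)
    (hr : ∀ i, c (r i) = i) (hrK : ∀ i, {r i} ∈ K) :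
    ∃ W : Finset J → Finset V →₀ R, (∀ i, W {i} = Finsupp.single {r i} 1) ∧
      ∀ S : Finset J, IsFillingAt K c W S := by
  have hupto : ∀ n, 1 ≤ n → ∃ W : Finset J → Finset V →₀ R,
      (∀ i, W {i} = Finsupp.single {r i} 1) ∧ ∀ S : Finset J, S.card ≤ n → IsFillingAt K c W S := by
    refine Nat.le_induction (exists_isFillingAt_of_card_le_one r hr hrK) fun n hn ih => ?_
    obtain ⟨W, hW₁, hW⟩ := ih
    obtain ⟨W', hagree, hW'⟩ := exists_isFillingAt_succ hK hn hW
    exact ⟨W', fun i => (hagree {i} (by simpa using hn)).trans (hW₁ i), hW'⟩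
  obtain ⟨W, hW₁, hW⟩ := hupto (Fintype.card J + 1) (by omega)
  exact ⟨W, hW₁, fun S => hW S ((card_le_univ S).trans (by omega))⟩

end Filling

section Rainbow

theorem colour_ne_of_isolated {V J : Type*} [DecidableEq V] {K : Set (Finset V)} (hK : IsComplex K)
    {c : V → J} {v : V} (hiso : ∀ u : V, u ≠ v → c u = c v → ({v, u} : Finset V) ∉ K)
    {s : Finset V} (hs : s ∈ K) (hv : v ∈ s) {u : V} (hu : u ∈ s) (huv : u ≠ v) :
    c u ≠ c v := fun hcu =>
  hiso u huv hcu (hK.2 s hs _ (insert_subset_iff.2 ⟨hv, singleton_subset_iff.2 hu⟩)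
    (insert_nonempty _ _))

variable {V J : Type*} [LinearOrder V] [LinearOrder J] {R : Type*} [CommRing R]
  {K : Set (Finset V)} {c : V → J} {v : V}

-- The signed number of faces of `W S` through `v` whose other vertices are coloured bijectively
-- by `S \ {c v}`.
variable (c v) in
noncomputable def rainbowCoeff (W : Finset J → Finset V →₀ R)
    (S : Finset J) : R :=
  pushforward c (contract v (W S)) (S.erase (c v))

theorem pushforward_contract_eq_single (hK : IsComplex K)
    (hiso : ∀ u : V, u ≠ v → c u = c v → ({v, u} : Finset V) ∉ K)
    {W : Finset J → Finset V →₀ R} {S : Finset J} (hW : IsFillingAt K c W S) :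
    pushforward c (contract v (W S)) = Finsupp.single (S.erase (c v)) (rainbowCoeff c v W S) := by
  refine Finsupp.support_subset_singleton.1 fun t ht => ?_
  obtain ⟨u, hu, hinj, rfl⟩ := exists_of_mem_support_pushforward ht
  obtain ⟨s, hs, hvs, rfl⟩ := exists_of_mem_support_contract hu
  obtain ⟨hcard, hsK⟩ := hW.1 hs
  obtain ⟨hsK, hcol⟩ := hsK (card_pos.1 (hcard ▸ card_pos.2 ⟨v, hvs⟩))
  have hsub : (s.erase v).image c ⊆ S.erase (c v) := fun j hj => by
    obtain ⟨x, hx, rfl⟩ := mem_image.1 hj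
    obtain ⟨hxv, hxs⟩ := mem_erase.1 hx
    exact mem_erase.2 ⟨colour_ne_of_isolated hK hiso hsK hvs hxs hxv, hcol x hxs⟩
  refine mem_singleton.2 (eq_of_subset_of_card_le hsub ?_)
  rw [card_image_of_injOn hinj, card_erase_of_mem hvs, card_erase_of_mem (hcol v hvs), hcard]

theorem eraseSign_mul_rainbowCoeff_erase (hK : IsComplex K)
    (hiso : ∀ u : V, u ≠ v → c u = c v → ({v, u} : Finset V) ∉ K)
    {W : Finset J → Finset V →₀ R} (hW : ∀ S : Finset J, IsFillingAt K c W S) {S : Finset J}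
    {i : J} (hi : i ∈ S) (hicv : i ≠ c v) :
    eraseSign S i * rainbowCoeff c v W (S.erase i) =
      -(eraseSign (S.erase (c v)) i * rainbowCoeff c v W S) := by
  -- Compare the coefficients of `(S \ {c v}) \ {i}` on both sides of `contract_boundary`.
  have key := congrArg (fun x => pushforward c x ((S.erase (c v)).erase i))
    (contract_boundary v (W S))
  rw [map_neg, pushforward_boundary, pushforward_contract_eq_single hK hiso (hW S),
    Finsupp.neg_apply, boundary_single_apply_erase (mem_erase.2 ⟨hicv, hi⟩), (hW S).2,
    linearCombination_boundary_single, map_sum, map_sum, Finsupp.finsetSum_apply,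
    sum_eq_single i] at key
  · rwa [map_smul, map_smul, pushforward_contract_eq_single hK hiso (hW _), Finsupp.smul_apply,
      erase_right_comm, Finsupp.single_eq_same, smul_eq_mul, mul_one] at key
  · intro j hj hji
    rw [map_smul, map_smul, pushforward_contract_eq_single hK hiso (hW _), Finsupp.smul_apply,
      Finsupp.single_eq_of_ne, smul_zero]
    intro h
    rcases eq_or_ne j (c v) with rfl | hjv
    · have hmem : i ∈ (S.erase (c v)).erase (c v) := by simp [hi, hicv]
      rw [← h] at hmem
      simp at hmem
    · have hmem : j ∈ (S.erase (c v)).erase i := by simp [hj, hjv, hji]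
      rw [h] at hmem
      simp at hmem
  · exact fun h => absurd hi h

theorem rainbowCoeff_ne_zero [Nontrivial R] (hK : IsComplex K)
    (hiso : ∀ u : V, u ≠ v → c u = c v → ({v, u} : Finset V) ∉ K)
    {W : Finset J → Finset V →₀ R} (hW : ∀ S : Finset J, IsFillingAt K c W S)
    (hWv : W {c v} = Finsupp.single {v} 1) {S : Finset J} (hvS : c v ∈ S) :
    rainbowCoeff c v W S ≠ 0 := by
  induction S using Finset.strongInduction with
  | H S ih =>
  by_cases hS : S = {c v}
  · subst hS
    simp [rainbowCoeff, hWv, contract_single, pushforward_single, eraseSign, invSign, invCount,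
      filter_singleton]
  obtain ⟨i, hi, hicv⟩ : ∃ i ∈ S, i ≠ c v := by
    by_contra! h
    exact hS (eq_singleton_iff_unique_mem.2 ⟨hvS, h⟩)
  intro h0
  have hrec := eraseSign_mul_rainbowCoeff_erase hK hiso hW hi hicv
  rw [h0, mul_zero, neg_zero, eraseSign, neg_one_pow_mul_eq_zero_iff] at hrec
  exact ih _ (erase_ssubset hi) (mem_erase.2 ⟨hicv.symm, hvS⟩) hrec

theorem exists_rainbow_mem_of_isFillingAt [Fintype J] [Nontrivial R] (hK : IsComplex K)
    (hiso : ∀ u : V, u ≠ v → c u = c v → ({v, u} : Finset V) ∉ K)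
    {W : Finset J → Finset V →₀ R} (hW : ∀ S : Finset J, IsFillingAt K c W S)
    (hWv : W {c v} = Finsupp.single {v} 1) :
    ∃ s ∈ K, v ∈ s ∧ ∀ i : J, ∃! u, u ∈ s ∧ c u = i := by
  have hmem : univ.erase (c v) ∈ (pushforward c (contract v (W univ))).support :=
    Finsupp.mem_support_iff.2 (rainbowCoeff_ne_zero hK hiso hW hWv (mem_univ _))
  obtain ⟨u, hu, hinj, himg⟩ := exists_of_mem_support_pushforward hmem
  obtain ⟨s, hs, hvs, rfl⟩ := exists_of_mem_support_contract hu
  obtain ⟨hsK, -⟩ := ((hW univ).1 hs).2 ⟨c v, mem_univ _⟩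
  refine ⟨s, hsK, hvs, fun i => ?_⟩
  have hinj_s : Set.InjOn c s := by
    rw [← insert_erase hvs, coe_insert, Set.injOn_insert (notMem_erase v s), ← coe_image, ← himg]
    exact ⟨hinj, notMem_erase _ _⟩
  have himg_s : s.image c = univ := by
    rw [← insert_erase hvs, image_insert, ← himg, insert_erase (mem_univ _)]
  obtain ⟨x, hx, rfl⟩ := mem_image.1 (himg_s ▸ mem_univ i)
  exact ⟨x, ⟨hx, rfl⟩, fun y hy => hinj_s hy.1 hx hy.2⟩

end Rainbow

/-- Sperner-type lemma with a prescribed vertex: a vertex isolated within its own colour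
class lies in some rainbow simplex. -/
theorem rainbow_through_isolated_vertex {V : Type*} [LinearOrder V] (F : Type*)
    [Field F] (m : ℕ)
    (K : Set (Finset V)) (hK : IsComplex K) (hvert : ∀ v : V, {v} ∈ K)
    (c : V → Fin (m + 1))
    (v : V) (hiso : ∀ u : V, u ≠ v → c u = c v → ({v, u} : Finset V) ∉ K)
    (h : ∀ S : Finset (Fin (m + 1)), S.Nonempty →
      RedHVanish F F V {s ∈ K | ∀ w ∈ s, c w ∈ S} ((S.card : ℤ) - 2)) :
    ∃ s ∈ K, v ∈ s ∧ ∀ i : Fin (m + 1), ∃! u, u ∈ s ∧ c u = i := by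
  have hcol : ∀ i, ∃ x, c x = i := fun i => by
    have hi := h {i} (singleton_nonempty i)
    rw [card_singleton, RedHVanish, if_neg (by norm_num), if_pos (by norm_num)] at hi
    obtain ⟨s, hsK, hs⟩ := hi
    obtain ⟨x, hx⟩ := hK.1 s hsK
    exact ⟨x, mem_singleton.1 (hs x hx)⟩
  choose r hr using hcol
  have hacyclic : ColourAcyclic F K c := fun S k hS z hz hcyc => by
    have hS' := h S (card_pos.1 (by omega))
    rw [RedHVanish, if_neg (by omega), if_neg (by omega), hS,
      show (((k + 2 : ℕ) : ℤ) - 2).toNat = k by omega] at hS'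
    exact exists_boundary_eq_of_subsingleton_redH hS' hz hcyc
  obtain ⟨W, hW₁, hW⟩ := exists_isFillingAt hacyclic (Function.update r (c v) v)
    (fun i => by by_cases hi : i = c v <;> simp [hi, hr])
    (fun i => hvert _)
  exact exists_rainbow_mem_of_isFillingAt hK hiso hW (by rw [hW₁, Function.update_self])
end

section
/- Let K be a simplicial complex whose vertex set is partitioned into V_0,…,V_m such that each induced subcomplex K_{{i}} is 0-dimensional (no two vertices of the same colour span an edge), and let F be a field. If H̃_{|S|-2}(K_S, F) = 0 for every nonempty S ⊆ {0,…,m}, then every simplex of K is contained in a rainbow simplex. -/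
open Finset

variable (R : Type*) [CommRing R] (A : Type*) [AddCommGroup A] [Module R A]
variable (V : Type*) [LinearOrder V]

/-!
To extend a simplex `s` by a missing colour `j`, build for every face `σ ⊆ s`, by induction on
`|σ|`, a chain `g σ` of dimension `|σ|` in the subcomplex on the colours of `σ` together with `j`,
such that `∂ (g σ) = σ - g (∂ σ)`: a cone over `σ` with apex of colour `j`. The empty face is
coned off by a vertex of colour `j`, and for `σ ≠ ∅` the chain `σ - g (∂ σ)` is a cycle of
dimension `|σ| - 1` on `|σ| + 1` colours, hence a boundary by hypothesis. The coefficient of `s`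
in `∂ (g s)` is `1`, so some simplex of `g s` is `s` plus one vertex, which must have colour `j`.
Adding missing colours one at a time yields a rainbow simplex.
-/

section Boundary

variable {V}

def faceSign (t : Finset V) (v : V) : R :=
  (-1) ^ #(t.filter (· < v))

-- The reduced boundary on all finite vertex sets at once: `∂ {v} = ∅`, so the empty set is the
-- cell of degree `-1` and the augmentation is part of `∂`.
noncomputable def chainBoundary : (Finset V →₀ R) →ₗ[R] (Finset V →₀ R) :=
  Finsupp.linearCombination R fun t => ∑ v ∈ t, faceSign R t v • Finsupp.single (t.erase v) 1

variable {R}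

lemma chainBoundary_single (t : Finset V) (a : R) :
    chainBoundary R (Finsupp.single t a) =
      a • ∑ v ∈ t, faceSign R t v • Finsupp.single (t.erase v) 1 :=
  Finsupp.linearCombination_single R a t

lemma faceSign_mul_faceSign_erase {t : Finset V} {v w : V} (hw : w ∈ t) (hwv : w < v) :
    faceSign R t v * faceSign R (t.erase v) w = -(faceSign R t w * faceSign R (t.erase w) v) := by
  have hv : v ∉ t.filter (· < w) := by simp [hwv.le.not_gt]
  have hw' : w ∈ t.filter (· < v) := mem_filter.2 ⟨hw, hwv⟩
  have hpos : 0 < #(t.filter (· < v)) := card_pos.2 ⟨w, hw'⟩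
  simp only [faceSign, filter_erase, erase_eq_of_notMem hv, card_erase_of_mem hw', ← pow_add]
  rw [← neg_one_mul ((-1 : R) ^ _), ← pow_succ']
  congr 1
  omega

lemma chainBoundary_chainBoundary (x : Finset V →₀ R) :
    chainBoundary R (chainBoundary R x) = 0 := by
  suffices h : (chainBoundary R (V := V)).comp (chainBoundary R) = 0 from LinearMap.congr_fun h x
  refine Finsupp.lhom_ext fun t a => ?_
  rw [LinearMap.comp_apply, LinearMap.zero_apply, chainBoundary_single, map_smul, map_sum]
  simp only [map_smul, chainBoundary_single, smul_sum, smul_smul, one_mul]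
  rw [sum_sigma']
  refine sum_involution (fun p _ => ⟨p.2, p.1⟩) ?_ ?_ ?_ ?_
  · rintro ⟨v, w⟩ hp
    simp only [mem_sigma, mem_erase] at hp
    obtain ⟨hv, hwv, hw⟩ := hp
    dsimp only
    rw [erase_right_comm, ← add_smul, ← mul_add]
    rcases lt_or_gt_of_ne hwv with h | h
    · rw [faceSign_mul_faceSign_erase hw h, neg_add_cancel, mul_zero, zero_smul]
    · rw [faceSign_mul_faceSign_erase hv h, add_neg_cancel, mul_zero, zero_smul]
  · rintro ⟨v, w⟩ hp - h
    simp only [mem_sigma, mem_erase] at hp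
    exact hp.2.1 (congrArg Sigma.fst h)
  · rintro ⟨v, w⟩ hp
    simp only [mem_sigma, mem_erase] at hp ⊢
    exact ⟨hp.2.2, Ne.symm hp.2.1, hp.1⟩
  · intros; rfl

lemma chainBoundary_mapDomain_bdry {n : ℕ} (x : Chains R V (n + 1)) :
    chainBoundary R (x.mapDomain Subtype.val) = (bdry R R V n x).mapDomain Subtype.val := by
  induction x using Finsupp.induction_linear with
  | zero => simp
  | add x y hx hy => simp only [Finsupp.mapDomain_add, map_add, hx, hy]
  | single t a =>
    rw [Finsupp.mapDomain_single, chainBoundary_single, bdry, Finsupp.lsum_single]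
    simp only [LinearMap.sum_apply, LinearMap.smul_apply, Finsupp.lsingle_apply]
    rw [Finsupp.mapDomain_finsetSum, ← sum_attach (t : Finset V), smul_sum]
    refine sum_congr rfl fun v _ => ?_
    rw [Finsupp.mapDomain_smul, Finsupp.mapDomain_single, smul_smul, Finsupp.smul_single, faceSign]
    simp [Finsupp.smul_single, zsmul_eq_mul, mul_comm]

lemma chainBoundary_mapDomain_aug (x : Chains R V 0) :
    chainBoundary R (x.mapDomain Subtype.val) = Finsupp.single ∅ (aug R R V x) := by
  induction x using Finsupp.induction_linear with
  | zero => simp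
  | add x y hx hy => simp only [Finsupp.mapDomain_add, map_add, hx, hy, Finsupp.single_add]
  | single t a =>
    obtain ⟨v, hv⟩ : ∃ v, (t : Finset V) = {v} := card_eq_one.1 t.2
    rw [Finsupp.mapDomain_single, chainBoundary_single, hv, sum_singleton, erase_singleton, aug,
      Finsupp.lsum_single]
    simp only [faceSign, filter_singleton, lt_irrefl, if_false, card_empty, pow_zero, one_smul,
      Finsupp.smul_single_one, LinearMap.id_apply]

lemma exists_erase_eq_of_chainBoundary_apply_ne_zero {x : Finset V →₀ R} {σ : Finset V}
    (h : chainBoundary R x σ ≠ 0) : ∃ r ∈ x.support, ∃ v ∈ r, r.erase v = σ := by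
  contrapose! h
  rw [chainBoundary, Finsupp.linearCombination_apply, Finsupp.sum, Finsupp.finsetSum_apply]
  refine sum_eq_zero fun r hr => ?_
  simp only [Finsupp.smul_apply, Finsupp.finsetSum_apply, Finsupp.single_apply]
  rw [sum_eq_zero fun v hv => by rw [if_neg (h r hr v hv), smul_zero], smul_zero]

end Boundary

section Exactness

variable {V}

def IsExactAt (L : Set (Finset V)) (n : ℕ) : Prop :=
  ∀ w ∈ Finsupp.supported R R {t | t ∈ L ∧ #t = n + 1}, chainBoundary R w = 0 →
    ∃ x ∈ Finsupp.supported R R {t | t ∈ L ∧ #t = n + 2}, chainBoundary R x = w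

lemma isExactAt_of_subsingleton_redH {L : Set (Finset V)} {n : ℕ}
    [Subsingleton (redH R R V L n)] : IsExactAt R L n := by
  intro w hw hDw
  have hval : Function.Injective (Subtype.val : {s : Finset V // #s = n + 1} → Finset V) :=
    Subtype.val_injective
  set w' : Chains R V n := w.comapDomain Subtype.val hval.injOn
  have hw' : w'.mapDomain Subtype.val = w :=
    Finsupp.mapDomain_comapDomain _ hval w fun t ht => ⟨⟨t, (hw ht).2⟩, rfl⟩
  have hcyc : w' ∈ cyclesIn R R V L n := by
    refine ⟨?_, fun t ht =>
      (hw (Finsupp.mem_support_iff.2 (Finsupp.mem_support_iff.1 ht : w' t ≠ 0))).1⟩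
    cases n with
    | zero =>
      have h := chainBoundary_mapDomain_aug w'
      rw [hw', hDw, eq_comm, Finsupp.single_eq_zero] at h
      exact h
    | succ n =>
      show bdry R R V n w' = 0
      apply Finsupp.mapDomain_injective Subtype.val_injective
      rw [← chainBoundary_mapDomain_bdry, hw', hDw, Finsupp.mapDomain_zero]
  obtain ⟨x', hx', hbx'⟩ : w' ∈ boundariesIn R R V L n :=
    (Submodule.Quotient.mk_eq_zero ((boundariesIn R R V L n).comap (cyclesIn R R V L n).subtype)
      (x := ⟨w', hcyc⟩)).1
      (Subsingleton.elim _ 0)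
  refine ⟨x'.mapDomain Subtype.val, ?_, ?_⟩
  · refine Finsupp.supported_comap_lmapDomain R R Subtype.val {t | t ∈ L ∧ #t = n + 2} ?_
    refine Finsupp.supported_mono ?_ hx'
    exact fun t (ht : ↑t ∈ L) => show (t : Finset V) ∈ L ∧ #(t : Finset V) = n + 2 from ⟨ht, t.2⟩
  · rw [chainBoundary_mapDomain_bdry, hbx', hw']

variable {R}

lemma isExactAt_of_redHVanish {L : Set (Finset V)} {n : ℕ}
    (h : RedHVanish R R V L n) : IsExactAt R L n := by
  rw [RedHVanish, if_neg (by omega), if_neg (by omega), Int.toNat_natCast] at h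
  exact isExactAt_of_subsingleton_redH R

lemma nonempty_of_redHVanish_neg_one {L : Set (Finset V)} (h : RedHVanish R R V L (-1)) :
    L.Nonempty := by
  simpa [RedHVanish] using h

end Exactness

section Cone

variable {R V} {Φ : Finset V → Set (Finset V)} {g : Finset V → Finset V →₀ R}

-- `g` is a contracting homotopy at `σ` (`∂ g + g ∂ = id` there) carried by `Φ`.
def IsConeOn (Φ : Finset V → Set (Finset V)) (g : Finset V → Finset V →₀ R) (σ : Finset V) :
    Prop :=
  g σ ∈ Finsupp.supported R R {t | t ∈ Φ σ ∧ #t = #σ + 1} ∧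
    chainBoundary R (g σ) =
      Finsupp.single σ 1 - Finsupp.linearCombination R g (chainBoundary R (Finsupp.single σ 1))

lemma linearCombination_chainBoundary_single (g : Finset V → Finset V →₀ R) (σ : Finset V) :
    Finsupp.linearCombination R g (chainBoundary R (Finsupp.single σ 1)) =
      ∑ v ∈ σ, faceSign R σ v • g (σ.erase v) := by
  simp only [chainBoundary_single, one_smul, map_sum, map_smul, Finsupp.linearCombination_single]

lemma chainBoundary_linearCombination_chainBoundary_single {σ : Finset V}
    (hg : ∀ v ∈ σ, IsConeOn Φ g (σ.erase v)) :
    chainBoundary R (Finsupp.linearCombination R g (chainBoundary R (Finsupp.single σ 1))) =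
      chainBoundary R (Finsupp.single σ 1) := by
  calc _ = ∑ v ∈ σ, faceSign R σ v • chainBoundary R (g (σ.erase v)) := by
        rw [linearCombination_chainBoundary_single, map_sum]
        simp only [map_smul]
    _ = ∑ v ∈ σ, faceSign R σ v • (Finsupp.single (σ.erase v) 1 -
          Finsupp.linearCombination R g (chainBoundary R (Finsupp.single (σ.erase v) 1))) :=
        sum_congr rfl fun v hv => by rw [(hg v hv).2]
    _ = chainBoundary R (Finsupp.single σ 1) - Finsupp.linearCombination R g
          (chainBoundary R (chainBoundary R (Finsupp.single σ 1))) := by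
        rw [chainBoundary_single σ (1 : R), one_smul]
        simp only [smul_sub, sum_sub_distrib, map_sum, map_smul]
    _ = chainBoundary R (Finsupp.single σ 1) := by
        rw [chainBoundary_chainBoundary, map_zero, sub_zero]

lemma linearCombination_congr_of_forall_erase {g' : Finset V → Finset V →₀ R} {σ : Finset V}
    (h : ∀ v ∈ σ, g' (σ.erase v) = g (σ.erase v)) :
    Finsupp.linearCombination R g' (chainBoundary R (Finsupp.single σ 1)) =
      Finsupp.linearCombination R g (chainBoundary R (Finsupp.single σ 1)) := by
  simp only [linearCombination_chainBoundary_single]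
  exact sum_congr rfl fun v hv => by rw [h v hv]

lemma exists_cone_of_forall_erase {σ : Finset V} (hmem : σ.Nonempty → σ ∈ Φ σ)
    (hmono : ∀ v ∈ σ, Φ (σ.erase v) ⊆ Φ σ) (hexact : σ.Nonempty → IsExactAt R (Φ σ) (#σ - 1))
    (hbase : σ = ∅ → ∃ u, {u} ∈ Φ σ) (hg : ∀ v ∈ σ, IsConeOn Φ g (σ.erase v)) :
    ∃ x ∈ Finsupp.supported R R {t | t ∈ Φ σ ∧ #t = #σ + 1},
      chainBoundary R x = Finsupp.single σ 1 -
        Finsupp.linearCombination R g (chainBoundary R (Finsupp.single σ 1)) := by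
  rcases σ.eq_empty_or_nonempty with rfl | hne
  · obtain ⟨u, hu⟩ := hbase rfl
    refine ⟨Finsupp.single {u} 1, Finsupp.single_mem_supported R _ ⟨hu, rfl⟩, ?_⟩
    simp only [chainBoundary_single, sum_singleton, erase_singleton, faceSign, filter_singleton,
      lt_irrefl, if_false, card_empty, pow_zero, one_smul, sum_empty, map_zero, sub_zero]
  · have hcard : #σ - 1 + 1 = #σ := Nat.sub_add_cancel hne.card_pos
    have hcycle : chainBoundary R (Finsupp.single σ 1 -
        Finsupp.linearCombination R g (chainBoundary R (Finsupp.single σ 1))) = 0 := by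
      rw [map_sub, chainBoundary_linearCombination_chainBoundary_single hg, sub_self]
    have hsupp : Finsupp.single σ 1 - Finsupp.linearCombination R g
        (chainBoundary R (Finsupp.single σ 1)) ∈
          Finsupp.supported R R {t | t ∈ Φ σ ∧ #t = #σ - 1 + 1} := by
      refine sub_mem (Finsupp.single_mem_supported R _ ⟨hmem hne, hcard.symm⟩) ?_
      rw [linearCombination_chainBoundary_single]
      refine sum_mem fun v hv => Submodule.smul_mem _ _ (Finsupp.supported_mono ?_ (hg v hv).1)
      rintro t ⟨ht, htcard⟩
      exact ⟨hmono v hv ht, by rw [htcard, card_erase_of_mem hv]⟩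
    obtain ⟨x, hx, hDx⟩ := hexact hne _ hsupp hcycle
    exact ⟨x, by rwa [← hcard], hDx⟩

-- The method of acyclic carriers.
theorem exists_forall_isConeOn {s : Finset V} (hmem : ∀ σ ⊆ s, σ.Nonempty → σ ∈ Φ σ)
    (hmono : ∀ σ ⊆ s, ∀ v ∈ σ, Φ (σ.erase v) ⊆ Φ σ)
    (hexact : ∀ σ ⊆ s, σ.Nonempty → IsExactAt R (Φ σ) (#σ - 1)) (hbase : ∃ u, {u} ∈ Φ ∅) :
    ∃ g : Finset V → Finset V →₀ R, ∀ σ ⊆ s, IsConeOn Φ g σ := by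
  suffices h : ∀ n, ∃ g : Finset V → Finset V →₀ R, ∀ σ ⊆ s, #σ < n → IsConeOn Φ g σ by
    obtain ⟨g, hg⟩ := h (#s + 1)
    exact ⟨g, fun σ hσ => hg σ hσ (Nat.lt_succ_of_le (card_le_card hσ))⟩
  intro n
  induction n with
  | zero => exact ⟨0, fun σ _ h => absurd h (Nat.not_lt_zero _)⟩
  | succ n ih =>
    obtain ⟨g, hg⟩ := ih
    have hnext : ∀ σ, σ ⊆ s → #σ = n → ∃ x ∈ Finsupp.supported R R {t | t ∈ Φ σ ∧ #t = #σ + 1},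
        chainBoundary R x = Finsupp.single σ 1 -
          Finsupp.linearCombination R g (chainBoundary R (Finsupp.single σ 1)) := by
      intro σ hσ hn
      refine exists_cone_of_forall_erase (hmem σ hσ) (hmono σ hσ) (hexact σ hσ)
        (fun h => h ▸ hbase) fun v hv => hg _ ((erase_subset v σ).trans hσ) ?_
      rw [← hn]
      exact card_erase_lt_of_mem hv
    choose! x hx hDx using hnext
    refine ⟨fun σ => if #σ = n then x σ else g σ, fun σ hσ hlt => ?_⟩
    have hfacets : Finsupp.linearCombination R (fun σ => if #σ = n then x σ else g σ)
        (chainBoundary R (Finsupp.single σ 1)) =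
          Finsupp.linearCombination R g (chainBoundary R (Finsupp.single σ 1)) :=
      linearCombination_congr_of_forall_erase fun v hv =>
        if_neg (by have := card_erase_lt_of_mem hv; omega)
    rcases Nat.lt_succ_iff_lt_or_eq.1 hlt with hlt | heq
    · simpa only [IsConeOn, if_neg hlt.ne, hfacets] using hg σ hσ hlt
    · simp only [IsConeOn, if_pos heq, hfacets]
      exact ⟨hx σ hσ heq, hDx σ hσ heq⟩

lemma exists_erase_eq_of_isConeOn [Nontrivial R] {s : Finset V} (hg : IsConeOn Φ g s)
    (hfacets : ∀ v ∈ s, IsConeOn Φ g (s.erase v)) (hs : ∀ v ∈ s, s ∉ Φ (s.erase v)) :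
    ∃ r ∈ Φ s, ∃ v ∈ r, r.erase v = s := by
  have hcoeff : chainBoundary R (g s) s = 1 := by
    rw [hg.2, linearCombination_chainBoundary_single, Finsupp.sub_apply, Finsupp.single_eq_same,
      Finsupp.finsetSum_apply, sum_eq_zero, sub_zero]
    intro v hv
    rw [Finsupp.smul_apply, Finsupp.notMem_support_iff.1 fun hmem => ?_, smul_zero]
    exact hs v hv ((hfacets v hv).1 hmem).1
  obtain ⟨r, hr, v, hvr, hrv⟩ :=
    exists_erase_eq_of_chainBoundary_apply_ne_zero (by rw [hcoeff]; exact one_ne_zero)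
  exact ⟨r, (hg.1 hr).1, v, hvr, hrv⟩

end Cone

lemma IsComplex.injOn_of_forall_pair_notMem {V ι : Type*} [DecidableEq V] {K : Set (Finset V)}
    {c : V → ι} (hK : IsComplex K)
    (h0 : ∀ u w : V, u ≠ w → c u = c w → ({u, w} : Finset V) ∉ K) {t : Finset V} (ht : t ∈ K) :
    Set.InjOn c t := by
  intro u hu w hw hc
  by_contra hne
  exact h0 u w hne hc
    (hK.2 t ht _ (insert_subset hu (singleton_subset_iff.2 hw)) (insert_nonempty _ _))

theorem exists_insert_mem_of_notMem_image {R V ι : Type*} [CommRing R] [Nontrivial R]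
    [LinearOrder V] [DecidableEq ι] {K : Set (Finset V)} {c : V → ι} (hK : IsComplex K)
    (hinj : ∀ t ∈ K, Set.InjOn c t)
    (hexact : ∀ S : Finset ι, 2 ≤ #S → IsExactAt R {t ∈ K | ∀ w ∈ t, c w ∈ S} (#S - 2))
    (hcolour : ∀ j, ∃ u, {u} ∈ K ∧ c u = j) {s : Finset V} (hs : s ∈ K) {j : ι}
    (hj : j ∉ s.image c) : ∃ u, c u = j ∧ insert u s ∈ K := by
  have hcard : ∀ σ ⊆ s, #(insert j (σ.image c)) = #σ + 1 := fun σ hσ => by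
    rw [card_insert_of_notMem fun h => hj (image_subset_image hσ h),
      card_image_of_injOn ((hinj s hs).mono (coe_subset.2 hσ))]
  obtain ⟨g, hg⟩ := exists_forall_isConeOn (R := R) (s := s)
    (Φ := fun σ => {t ∈ K | ∀ w ∈ t, c w ∈ insert j (σ.image c)})
    (fun σ hσ hne => ⟨hK.2 s hs σ hσ hne, fun w hw => mem_insert_of_mem (mem_image_of_mem c hw)⟩)
    (fun σ _ v _ t ⟨htK, htc⟩ => ⟨htK, fun w hw =>
      insert_subset_insert j (image_subset_image (erase_subset v σ)) (htc w hw)⟩)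
    (fun σ hσ hne => by
      rw [show #σ - 1 = #(insert j (σ.image c)) - 2 by rw [hcard σ hσ]; omega]
      exact hexact _ (by rw [hcard σ hσ]; have := hne.card_pos; omega))
    (by
      obtain ⟨u, hu, hcu⟩ := hcolour j
      exact ⟨u, hu, by simp [hcu]⟩)
  obtain ⟨r, ⟨hrK, hrc⟩, v, hvr, rfl⟩ := exists_erase_eq_of_isConeOn
    (hg s subset_rfl) (fun v hv => hg _ (erase_subset v s)) fun v hv ⟨_, hcol⟩ => by
    rcases mem_insert.1 (hcol v hv) with h | h
    · exact hj (h ▸ mem_image_of_mem c hv)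
    · obtain ⟨w, hw, hcw⟩ := mem_image.1 h
      exact ne_of_mem_erase hw (hinj s hs (mem_of_mem_erase hw) hv hcw)
  refine ⟨v, ?_, by rwa [insert_erase hvr]⟩
  rcases mem_insert.1 (hrc v hvr) with h | h
  · exact h
  · obtain ⟨w, hw, hcw⟩ := mem_image.1 h
    exact absurd (hinj r hrK (mem_of_mem_erase hw) hvr hcw) (ne_of_mem_erase hw)

theorem exists_superset_image_eq_univ {V ι : Type*} [DecidableEq V] [Fintype ι] [DecidableEq ι]
    {K : Set (Finset V)} {c : V → ι}
    (hext : ∀ s ∈ K, ∀ j ∉ s.image c, ∃ u, c u = j ∧ insert u s ∈ K) {s : Finset V}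
    (hs : s ∈ K) : ∃ t ∈ K, s ⊆ t ∧ t.image c = univ := by
  obtain ⟨n, hn⟩ : ∃ n, #(s.image c)ᶜ = n := ⟨_, rfl⟩
  induction n generalizing s with
  | zero => exact ⟨s, hs, subset_rfl, (compl_eq_empty_iff _).1 (card_eq_zero.1 hn)⟩
  | succ n ih =>
    obtain ⟨j, hj⟩ := card_pos.1 (by rw [hn]; exact n.succ_pos)
    obtain ⟨u, hcu, hu⟩ := hext s hs j (mem_compl.1 hj)
    obtain ⟨t, ht, hut, htc⟩ :=
      ih hu (by rw [image_insert, hcu, compl_insert, card_erase_of_mem hj, hn]; rfl)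
    exact ⟨t, ht, (subset_insert u s).trans hut, htc⟩

theorem every_simplex_in_rainbow_general {V : Type*} [LinearOrder V] (F : Type*) [Field F]
    (m : ℕ) (K : Set (Finset V)) (hK : IsComplex K)
    (c : V → Fin (m + 1))
    (h0 : ∀ u w : V, u ≠ w → c u = c w → ({u, w} : Finset V) ∉ K)
    (h : ∀ S : Finset (Fin (m + 1)), S.Nonempty →
      RedHVanish F F V {s ∈ K | ∀ w ∈ s, c w ∈ S} ((S.card : ℤ) - 2)) :
    ∀ s ∈ K, ∃ t ∈ K, s ⊆ t ∧ ∀ i : Fin (m + 1), ∃! u, u ∈ t ∧ c u = i := by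
  have hinj : ∀ t ∈ K, Set.InjOn c t := fun t ht => hK.injOn_of_forall_pair_notMem h0 ht
  have hexact : ∀ S : Finset (Fin (m + 1)), 2 ≤ #S →
      IsExactAt F {t ∈ K | ∀ w ∈ t, c w ∈ S} (#S - 2) := fun S hS => by
    have hS' := h S (card_pos.1 (by omega))
    rw [show (#S : ℤ) - 2 = ((#S - 2 : ℕ) : ℤ) by omega] at hS'
    exact isExactAt_of_redHVanish hS'
  have hcolour : ∀ j, ∃ u, {u} ∈ K ∧ c u = j := fun j => by
    obtain ⟨t, htK, htc⟩ :=
      nonempty_of_redHVanish_neg_one (by simpa using h {j} (singleton_nonempty j))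
    obtain ⟨u, hu⟩ := hK.1 t htK
    exact ⟨u, hK.2 t htK {u} (singleton_subset_iff.2 hu) (singleton_nonempty u), htc u hu⟩
  intro s hs
  obtain ⟨t, ht, hst, htc⟩ := exists_superset_image_eq_univ
    (fun s hs j hj => exists_insert_mem_of_notMem_image hK hinj hexact hcolour hs hj) hs
  refine ⟨t, ht, hst, fun i => ?_⟩
  obtain ⟨u, hu, rfl⟩ := mem_image.1 (htc ▸ mem_univ i)
  exact ⟨u, ⟨hu, rfl⟩, fun w hw => hinj t ht hw.1 hu hw.2⟩

/-- If every colour class is `0`-dimensional and `H̃_{|S|-2}(K_S) = 0` for every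
nonempty `S`, then every simplex of `K` is contained in a rainbow simplex. -/
theorem every_simplex_in_rainbow {V : Type*} [LinearOrder V] (F : Type*) [Field F]
    (m : ℕ) (K : Set (Finset V)) (hK : IsComplex K) (hvert : ∀ v : V, {v} ∈ K)
    (c : V → Fin (m + 1))
    (h0 : ∀ u w : V, u ≠ w → c u = c w → ({u, w} : Finset V) ∉ K)
    (h : ∀ S : Finset (Fin (m + 1)), S.Nonempty →
      RedHVanish F F V {s ∈ K | ∀ w ∈ s, c w ∈ S} ((S.card : ℤ) - 2)) :
    ∀ s ∈ K, ∃ t ∈ K, s ⊆ t ∧ ∀ i : Fin (m + 1), ∃! u, u ∈ t ∧ c u = i :=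
  every_simplex_in_rainbow_general F m K hK c h0 h
end
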